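/- arXiv:2208.10416 — 7 statements merged into one kernel-verified Lean document; each statement's English description precedes it below -/
import Mathlib

section
/- Let ε > 0 and let S₀ = {u ∈ [0,M]^Ω : ‖λ·Wu‖₁ ≤ ‖λ·Wf‖₁}. Assume f ∈ [0,M]^Ω and |g[k] − (Af)[k]| ≤ η for every k ∈ Ω (so f ∈ F(z) for every z ∈ Ω^m, and every minimizer u^z lies in S₀). Then for every selection z ↦ u^z of minimizers, P{ z ∈ Ω^m : (1/|Ω|)·‖u^z − f‖²_{ℓ2(Ω)} ≤ ε + (16/3)·σ^{−2}·η² } ≥ 1 − N(S₀, σ²ε/(12‖A‖²_∞M)) · exp(−3·m·σ²·ε/(256·‖A‖²_∞·M²)). -/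
noncomputable section

open scoped BigOperators

namespace WFrame

/-- convolution of finitely supported sequences on an additive group -/
def fconv {G : Type*} [AddZeroClass G] (f g : G →₀ ℝ) : G →₀ ℝ :=
  f.sum fun a c => g.sum fun b d => Finsupp.single (a + b) (c * d)

/-- convolution power; `fpow f 0` is the Dirac delta at 0 -/
def fpow {G : Type*} [AddZeroClass G] (f : G →₀ ℝ) : ℕ → (G →₀ ℝ)
  | 0 => Finsupp.single 0 1
  | n + 1 => fconv (fpow f n) f

/-- the 1st order average filter p = δ₀ + δ₁ -/
def pF : ℤ →₀ ℝ := Finsupp.single 0 1 + Finsupp.single 1 1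

/-- the 1st order difference filter q = δ₀ − δ₁ -/
def qF : ℤ →₀ ℝ := Finsupp.single 0 1 - Finsupp.single 1 1

/-- j_r = 1 if r odd, 0 if r even -/
def jr (r : ℕ) : ℤ := if r % 2 = 1 then 1 else 0

/-- univariate B-spline UEP filter `a_α`; `aF r α k = aα[k]`.
`Finsupp.mapDomain (· + jr r)` shifts the sequence so that its value at `k` is the
value of the original sequence at `k - jr r`. -/
def aF (r α : ℕ) : ℤ →₀ ℝ :=
  if α = 0 then ((2:ℝ) ^ (-(r:ℤ))) • Finsupp.mapDomain (· + jr r) (fpow pF r)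
  else ((-1:ℝ) ^ (α + 1) * (2:ℝ) ^ (-(r:ℤ)) * Real.sqrt (r.choose α)) •
    Finsupp.mapDomain (· + jr r) (fconv (fpow pF (r - α)) (fpow qF α))

/-- tensor product of two finitely supported sequences -/
def tens2 (f g : ℤ →₀ ℝ) : (ℤ × ℤ) →₀ ℝ :=
  Finsupp.onFinset (f.support ×ˢ g.support) (fun k => f k.1 * g k.2) (fun k hk => by
    simp only [Finset.mem_product, Finsupp.mem_support_iff]
    exact ⟨left_ne_zero_of_mul hk, right_ne_zero_of_mul hk⟩)

/-- tensor product filter `a_{(α₁,α₂)}[(k₁,k₂)] = a_{α₁}[k₁]·a_{α₂}[k₂]` -/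
def a2 (r : ℕ) (α : ℕ × ℕ) : (ℤ × ℤ) →₀ ℝ := tens2 (aF r α.1) (aF r α.2)

/-- the band set B = {0,…,r}² \ {(0,0)} -/
def Band (r : ℕ) : Finset (ℕ × ℕ) :=
  (Finset.range (r + 1) ×ˢ Finset.range (r + 1)).erase (0, 0)

/-- upsampling: `upSample l a` equals `a[k/2^l]` on `2^l ℤ²` and `0` elsewhere -/
def upSample (l : ℕ) (a : (ℤ × ℤ) →₀ ℝ) : (ℤ × ℤ) →₀ ℝ :=
  Finsupp.mapDomain (fun k => ((2 ^ l : ℤ) * k.1, (2 ^ l : ℤ) * k.2)) a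

/-- `lowChain r l = ã_{l−1,(0,0)} ∗ ⋯ ∗ ã_{0,(0,0)}` (Dirac delta for `l = 0`) -/
def lowChain (r : ℕ) : ℕ → ((ℤ × ℤ) →₀ ℝ)
  | 0 => Finsupp.single 0 1
  | l + 1 => fconv (upSample l (a2 r (0, 0))) (lowChain r l)

/-- multi-level filter `a_{l,α} = ã_{l,α} ∗ ã_{l−1,(0,0)} ∗ ⋯ ∗ ã_{0,(0,0)}` -/
def aLvl (r l : ℕ) (α : ℕ × ℕ) : (ℤ × ℤ) →₀ ℝ :=
  fconv (upSample l (a2 r α)) (lowChain r l)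

/-- periodization `P_N(a)` of a finitely supported sequence on ℤ², as a function on
(ℤ/Nℤ)²: `per N a k = Σ_{m ≡ k (mod N)} a[m]`. -/
def per (N : ℕ) (a : (ℤ × ℤ) →₀ ℝ) (k : ZMod N × ZMod N) : ℝ :=
  ∑ m ∈ a.support, if ((m.1 : ZMod N), (m.2 : ZMod N)) = k then a m else 0

/-- periodic convolution `(a ⊛ u)[k] = Σ_{n∈Ω} P_N(a)[k−n]·u[n]` -/
def pconv (N : ℕ) [NeZero N] (a : (ℤ × ℤ) →₀ ℝ) (u : ZMod N × ZMod N → ℝ)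
    (k : ZMod N × ZMod N) : ℝ :=
  ∑ n : ZMod N × ZMod N, per N a (k - n) * u n

/-- reflection `a[−·]` -/
def refl2 (a : (ℤ × ℤ) →₀ ℝ) : (ℤ × ℤ) →₀ ℝ := Finsupp.mapDomain (fun k => -k) a

/-- wavelet frame coefficients `W_{l,α}u = a_{l,α}[−·] ⊛ u` -/
def Wc (r N : ℕ) [NeZero N] (l : ℕ) (α : ℕ × ℕ) (u : ZMod N × ZMod N → ℝ) :
    ZMod N × ZMod N → ℝ :=
  pconv N (refl2 (aLvl r l α)) u

/-- `‖Wu‖₁` -/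
def wnorm1 (r N L : ℕ) [NeZero N] (u : ZMod N × ZMod N → ℝ) : ℝ :=
  ∑ k : ZMod N × ZMod N, ∑ l ∈ Finset.range L, ∑ α ∈ Band r, |Wc r N l α u k|

/-- weighted norm `‖λ·Wu‖₁` -/
def wnormW (r N L : ℕ) [NeZero N] (lam : ℕ → ℕ × ℕ → ZMod N × ZMod N → ℝ)
    (u : ZMod N × ZMod N → ℝ) : ℝ :=
  ∑ k : ZMod N × ZMod N, ∑ l ∈ Finset.range L, ∑ α ∈ Band r,
    lam l α k * |Wc r N l α u k|

/-- discrete total variation (no wrap-around) on the grid {0,…,N−1}² -/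
def tv (N : ℕ) [NeZero N] (u : ZMod N × ZMod N → ℝ) : ℝ :=
  (∑ i ∈ Finset.range (N - 1), ∑ j ∈ Finset.range N,
      |u ((i : ZMod N) + 1, (j : ZMod N)) - u ((i : ZMod N), (j : ZMod N))|) +
  (∑ i ∈ Finset.range N, ∑ j ∈ Finset.range (N - 1),
      |u ((i : ZMod N), (j : ZMod N) + 1) - u ((i : ZMod N), (j : ZMod N))|)

/-- covering number of `S` by closed ℓ∞-balls of radius `t` with centers in `[0,Mb]^Ω` -/
def coverNum {X : Type*} (Mb t : ℝ) (S : Set (X → ℝ)) : ℕ :=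
  sInf {K : ℕ | ∃ v : Fin K → X → ℝ, (∀ j x, v j x ∈ Set.Icc 0 Mb) ∧
    ∀ u ∈ S, ∃ j, ∀ x, |u x - v j x| ≤ t}

open scoped Classical in
/-- probability of an event under i.i.d. uniform sampling of `m` points from a finite set -/
def prob {X : Type*} [Fintype X] {m : ℕ} (E : Set (Fin m → X)) : ℝ :=
  (∑ z : Fin m → X, if z ∈ E then (1:ℝ) else 0) / (Fintype.card X : ℝ) ^ m

end WFrame

/-!
Cover `S₀` by `K` sup-norm balls of radius `t = σ²ε/(12‖A‖²M)` with centres `v_j ∈ [0,M]^Ω`.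
Each residual `ξ_j = (A v_j − A f)²` takes values in `[0, ‖A‖²M²]`, so a Chernoff bound for the
lower tail of its sample mean shows that its mean over `Ω` exceeds `4/3` of its sample mean plus
`σ²ε/16` with probability at most `exp(−3mσ²ε/(256‖A‖²M²))`; a union bound over the `K` centres
gives the failure probability.

Off this event, `f` is feasible, so the minimizer `u^z` lies in `S₀` and within `t` of some
centre `v_j`. As both `u^z` and `f` fit the samples up to `η`, the sample residual of `u^z` is at
most `4η²`; replacing `u^z` by `v_j` changes the residual by at most `2‖A‖²Mt` at every point, and
`σ‖w‖₂ ≤ ‖Aw‖₂` turns the resulting bound on the mean residual of `u^z` into the error bound.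
-/

namespace WFrame

open Finset Real

section Averages

variable {ι : Type*} [Fintype ι]

lemma expect_eq_one_div_mul_sum {c : ℝ} (hc : (Fintype.card ι : ℝ) = c) (a : ι → ℝ) :
    𝔼 i, a i = 1 / c * ∑ i, a i := by
  rw [Fintype.expect_eq_sum_div_card, hc, one_div_mul_eq_div]

lemma expect_le_expect_add_of_le [Nonempty ι] {a b : ι → ℝ} {c : ℝ} (h : ∀ i, a i ≤ b i + c) :
    𝔼 i, a i ≤ 𝔼 i, b i + c := by
  calc 𝔼 i, a i ≤ 𝔼 i, (b i + c) := expect_le_expect fun i _ => h i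
    _ = 𝔼 i, b i + c := by rw [expect_add_distrib, Fintype.expect_const]

lemma abs_sq_sub_sq_le {p q c : ℝ} (hp : |p| ≤ c) (hq : |q| ≤ c) :
    |p ^ 2 - q ^ 2| ≤ 2 * c * |p - q| := by
  have hpq : |p + q| ≤ 2 * c := by linarith [abs_add_le p q]
  rw [sq_sub_sq, abs_mul]
  exact mul_le_mul_of_nonneg_right hpq (abs_nonneg _)

lemma expect_sq_sub_le_four_mul [Nonempty ι] {a b c : ι → ℝ} {η : ℝ}
    (hab : 𝔼 i, (a i - b i) ^ 2 ≤ η ^ 2) (hbc : ∀ i, |b i - c i| ≤ η) :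
    𝔼 i, (a i - c i) ^ 2 ≤ 4 * η ^ 2 := by
  have hpt : ∀ i, (a i - c i) ^ 2 ≤ 2 * (a i - b i) ^ 2 + 2 * η ^ 2 := fun i => by
    nlinarith [(abs_le.1 (hbc i)).elim sq_le_sq', sq_nonneg (a i - 2 * b i + c i)]
  calc 𝔼 i, (a i - c i) ^ 2 ≤ 𝔼 i, 2 * (a i - b i) ^ 2 + 2 * η ^ 2 :=
        expect_le_expect_add_of_le hpt
    _ ≤ 4 * η ^ 2 := by rw [← mul_expect]; linarith

lemma sq_mul_expect_sq_le {a b : ι → ℝ} {σ : ℝ} (hσ : 0 ≤ σ)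
    (h : σ * √(∑ i, a i ^ 2) ≤ √(∑ i, b i ^ 2)) :
    σ ^ 2 * 𝔼 i, a i ^ 2 ≤ 𝔼 i, b i ^ 2 := by
  have hsum : σ ^ 2 * ∑ i, a i ^ 2 ≤ ∑ i, b i ^ 2 := by
    have := pow_le_pow_left₀ (by positivity) h 2
    rwa [mul_pow, sq_sqrt (by positivity), sq_sqrt (by positivity)] at this
  simp only [Fintype.expect_eq_sum_div_card, ← mul_div_assoc]
  gcongr

lemma expect_prod_apply_eq_pow {X : Type*} [Fintype X] (g : X → ℝ) (m : ℕ) :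
    𝔼 z : Fin m → X, ∏ i, g (z i) = (𝔼 x, g x) ^ m := by
  simp only [Fintype.expect_eq_sum_div_card, div_pow, ← Fintype.sum_pow, Fintype.card_fun,
    Fintype.card_fin, Nat.cast_pow]

end Averages

section Sampling

open scoped Classical

variable {X : Type*} [Fintype X] {m : ℕ}

lemma prob_eq_expect (E : Set (Fin m → X)) :
    prob E = 𝔼 z, if z ∈ E then (1 : ℝ) else 0 := by
  rw [prob, Fintype.expect_eq_sum_div_card, Fintype.card_fun, Fintype.card_fin, Nat.cast_pow]

lemma prob_le_expect {E : Set (Fin m → X)} (φ : (Fin m → X) → ℝ) (hφ : ∀ z, 0 ≤ φ z)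
    (hE : ∀ z ∈ E, 1 ≤ φ z) : prob E ≤ 𝔼 z, φ z := by
  rw [prob_eq_expect]
  refine expect_le_expect fun z _ => ?_
  split_ifs with hz
  exacts [hE z hz, hφ z]

lemma prob_mono {E F : Set (Fin m → X)} (h : E ⊆ F) : prob E ≤ prob F := by
  rw [prob_eq_expect F]
  exact prob_le_expect _ (fun z => by split_ifs <;> norm_num) fun z hz => by simp [h hz]

lemma prob_compl [Nonempty X] (E : Set (Fin m → X)) : prob Eᶜ = 1 - prob E := by
  rw [prob_eq_expect, prob_eq_expect, eq_sub_iff_add_eq, ← expect_add_distrib]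
  refine (expect_congr rfl fun z _ => ?_).trans (Fintype.expect_const (1 : ℝ))
  by_cases hz : z ∈ E <;> simp [hz]

lemma prob_exists_le {κ : Type*} [Fintype κ] (P : κ → Set (Fin m → X)) :
    prob {z | ∃ j, z ∈ P j} ≤ ∑ j, prob (P j) := by
  simp only [prob_eq_expect (P _), ← expect_sum_comm]
  refine prob_le_expect _ (fun z => sum_nonneg fun j _ => by split_ifs <;> norm_num) ?_
  rintro z ⟨j, hj⟩
  calc (1 : ℝ) = if z ∈ P j then 1 else 0 := by simp [hj]
    _ ≤ ∑ j, if z ∈ P j then (1 : ℝ) else 0 :=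
      single_le_sum (f := fun j => if z ∈ P j then (1 : ℝ) else 0)
        (fun j _ => by split_ifs <;> norm_num) (mem_univ j)

lemma prob_le_exp_neg_mul_expect_exp_pow (Y : X → ℝ) (a : ℝ) :
    prob {z : Fin m → X | a ≤ ∑ i, Y (z i)} ≤ exp (-a) * (𝔼 x, exp (Y x)) ^ m := by
  rw [← expect_prod_apply_eq_pow, mul_expect]
  refine prob_le_expect _ (fun z => by positivity) fun z hz => ?_
  rw [← exp_sum, ← exp_add]
  exact one_le_exp (by linarith [Set.mem_ofPred_eq ▸ hz])

lemma expect_exp_neg_mul_le [Nonempty X] {ξ : X → ℝ} {B s : ℝ}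
    (hξ : ∀ x, ξ x ∈ Set.Icc 0 B) (hs : 0 ≤ s) (hsB : s * B ≤ 1) :
    𝔼 x, exp (-(s * ξ x)) ≤ exp ((s ^ 2 * B - s) * 𝔼 x, ξ x) := by
  have hpt : ∀ x, exp (-(s * ξ x)) ≤ 1 + (s ^ 2 * B - s) * ξ x := fun x => by
    obtain ⟨h0, hB⟩ := hξ x
    have hy : |-(s * ξ x)| ≤ 1 := by
      rw [abs_neg, abs_of_nonneg (by positivity)]
      nlinarith
    have := (abs_le.mp (abs_exp_sub_one_sub_id_le hy)).2
    nlinarith [mul_le_mul_of_nonneg_left hB (mul_nonneg (sq_nonneg s) h0)]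
  calc 𝔼 x, exp (-(s * ξ x)) ≤ 𝔼 x, (1 + (s ^ 2 * B - s) * ξ x) :=
        expect_le_expect fun x _ => hpt x
    _ = 1 + (s ^ 2 * B - s) * 𝔼 x, ξ x := by
        rw [expect_add_distrib, Fintype.expect_const, mul_expect]
    _ ≤ exp ((s ^ 2 * B - s) * 𝔼 x, ξ x) := by
        linarith [add_one_le_exp ((s ^ 2 * B - s) * 𝔼 x, ξ x)]

lemma prob_expect_lt_le [Nonempty X] {ξ : X → ℝ} {B : ℝ} (hB : 0 < B)
    (hξ : ∀ x, ξ x ∈ Set.Icc 0 B) (δ : ℝ) :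
    prob {z : Fin m → X | 4 / 3 * 𝔼 i, ξ (z i) + δ < 𝔼 x, ξ x} ≤
      exp (-(3 * m * δ) / (16 * B)) := by
  set μ := 𝔼 x, ξ x
  -- with this exponential moment the terms in `μ` cancel from the Chernoff exponent
  set s := 1 / (4 * B) with hs
  have hs0 : 0 ≤ s := by positivity
  have hsB : s * B ≤ 1 := by
    rw [hs, one_div, inv_mul_le_iff₀ (by positivity)]
    linarith
  have hsub : {z : Fin m → X | 4 / 3 * 𝔼 i, ξ (z i) + δ < μ} ⊆
      {z | -(s * (m * (3 / 4 * (μ - δ)))) ≤ ∑ i, -(s * ξ (z i))} := by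
    intro z hz
    have hsum : ∑ i, ξ (z i) = m * 𝔼 i, ξ (z i) := by
      rw [← card_smul_expect, card_univ, Fintype.card_fin, nsmul_eq_mul]
    have hmean : 𝔼 i, ξ (z i) ≤ 3 / 4 * (μ - δ) := by linarith [Set.mem_ofPred_eq ▸ hz]
    rw [Set.mem_ofPred_eq, sum_neg_distrib, ← mul_sum, neg_le_neg_iff, hsum]
    exact mul_le_mul_of_nonneg_left (mul_le_mul_of_nonneg_left hmean m.cast_nonneg) hs0
  calc prob {z : Fin m → X | 4 / 3 * 𝔼 i, ξ (z i) + δ < μ}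
      ≤ exp (s * (m * (3 / 4 * (μ - δ)))) * (𝔼 x, exp (-(s * ξ x))) ^ m := by
        simpa only [neg_neg] using (prob_mono hsub).trans
          (prob_le_exp_neg_mul_expect_exp_pow (fun x => -(s * ξ x)) _)
    _ ≤ exp (s * (m * (3 / 4 * (μ - δ)))) * exp ((s ^ 2 * B - s) * μ) ^ m := by
        gcongr
        exact expect_exp_neg_mul_le hξ hs0 hsB
    _ = exp (-(3 * m * δ) / (16 * B)) := by
        rw [← exp_nat_mul, ← exp_add, hs]
        congr 1
        field_simp
        ring

lemma prob_exists_expect_lt_le [Nonempty X] {κ : Type*} [Fintype κ] {ξ : κ → X → ℝ} {B : ℝ}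
    (hB : 0 < B) (hξ : ∀ j x, ξ j x ∈ Set.Icc 0 B) (δ : ℝ) :
    prob {z : Fin m → X | ∃ j, 4 / 3 * 𝔼 i, ξ j (z i) + δ < 𝔼 x, ξ j x} ≤
      Fintype.card κ * exp (-(3 * m * δ) / (16 * B)) :=
  calc _ ≤ ∑ j, prob {z : Fin m → X | 4 / 3 * 𝔼 i, ξ j (z i) + δ < 𝔼 x, ξ j x} :=
        prob_exists_le _
    _ ≤ ∑ _j : κ, exp (-(3 * m * δ) / (16 * B)) :=
        sum_le_sum fun j _ => prob_expect_lt_le hB (hξ j) δ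
    _ = _ := by rw [sum_const, card_univ, nsmul_eq_mul]

end Sampling

lemma exists_cover_coverNum {X : Type*} [Fintype X] {M t : ℝ} (ht : 0 < t) {S : Set (X → ℝ)}
    (hS : ∀ u ∈ S, ∀ x, u x ∈ Set.Icc 0 M) :
    ∃ v : Fin (coverNum M t S) → X → ℝ, (∀ j x, v j x ∈ Set.Icc 0 M) ∧
      ∀ u ∈ S, ∃ j, ∀ x, |u x - v j x| ≤ t := by
  have hne : {K : ℕ | ∃ v : Fin K → X → ℝ, (∀ j x, v j x ∈ Set.Icc 0 M) ∧
      ∀ u ∈ S, ∃ j, ∀ x, |u x - v j x| ≤ t}.Nonempty := by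
    obtain ⟨c, hcI, hcfin, hcov⟩ :=
      finite_cover_balls_of_compact (isCompact_Icc (a := (0 : X → ℝ)) (b := fun _ => M)) ht
    obtain ⟨c, rfl⟩ := hcfin.exists_finset_coe
    refine ⟨c.card, fun j => c.equivFin.symm j, fun j x => ?_, fun u hu => ?_⟩
    · obtain ⟨h0, hM⟩ := hcI (c.equivFin.symm j).2
      exact ⟨h0 x, hM x⟩
    · obtain ⟨w, hw, huw⟩ :=
        Set.mem_iUnion₂.mp (hcov ⟨fun x => (hS u hu x).1, fun x => (hS u hu x).2⟩)
      refine ⟨c.equivFin ⟨w, hw⟩, fun x => ?_⟩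
      simp only [Equiv.symm_apply_apply, ← Real.dist_eq]
      exact (dist_le_pi_dist u w x).trans (Metric.mem_ball.mp huw).le
  exact Nat.sInf_mem hne

section Operator

variable {X : Type*} [Fintype X] (A : (X → ℝ) →L[ℝ] (X → ℝ)) {M : ℝ} {u v f : X → ℝ}

lemma norm_sub_le_of_mem_Icc (hM : 0 ≤ M) (hu : ∀ x, u x ∈ Set.Icc 0 M)
    (hv : ∀ x, v x ∈ Set.Icc 0 M) : ‖u - v‖ ≤ M := by
  refine (pi_norm_le_iff_of_nonneg hM).2 fun x => ?_
  exact abs_sub_le_of_nonneg_of_le (hu x).1 (hu x).2 (hv x).1 (hv x).2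

lemma abs_apply_sub_apply_le (k : X) : |A u k - A v k| ≤ ‖A‖ * ‖u - v‖ := by
  rw [← Pi.sub_apply, ← map_sub, ← Real.norm_eq_abs]
  exact (norm_le_pi_norm _ k).trans (A.le_opNorm _)

lemma abs_apply_sub_apply_le_of_mem_Icc (hM : 0 ≤ M) (hu : ∀ x, u x ∈ Set.Icc 0 M)
    (hv : ∀ x, v x ∈ Set.Icc 0 M) (k : X) : |A u k - A v k| ≤ ‖A‖ * M :=
  (abs_apply_sub_apply_le A k).trans (by gcongr; exact norm_sub_le_of_mem_Icc hM hu hv)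

lemma abs_sq_residual_sub_le (hM : 0 ≤ M) (hu : ∀ x, u x ∈ Set.Icc 0 M)
    (hv : ∀ x, v x ∈ Set.Icc 0 M) (hf : ∀ x, f x ∈ Set.Icc 0 M) (k : X) :
    |(A u k - A f k) ^ 2 - (A v k - A f k) ^ 2| ≤ 2 * (‖A‖ * M) * (‖A‖ * ‖u - v‖) :=
  calc _ ≤ 2 * (‖A‖ * M) * |(A u k - A f k) - (A v k - A f k)| :=
        abs_sq_sub_sq_le (abs_apply_sub_apply_le_of_mem_Icc A hM hu hf k)
          (abs_apply_sub_apply_le_of_mem_Icc A hM hv hf k)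
    _ ≤ _ := by
        rw [sub_sub_sub_cancel_right]
        gcongr
        exact abs_apply_sub_apply_le A k

lemma expect_sq_sub_le_of_near {ι : Type*} [Fintype ι] [Nonempty ι] [Nonempty X]
    {σ η t δ ε : ℝ} {g : X → ℝ} (hσ : 0 < σ)
    (hσA : ∀ w : X → ℝ, σ * √(∑ k, w k ^ 2) ≤ √(∑ k, A w k ^ 2)) (hM : 0 ≤ M)
    (hu : ∀ x, u x ∈ Set.Icc 0 M) (hv : ∀ x, v x ∈ Set.Icc 0 M) (hf : ∀ x, f x ∈ Set.Icc 0 M)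
    (huv : ‖u - v‖ ≤ t) (z : ι → X) (hfit : 𝔼 i, (A u (z i) - g (z i)) ^ 2 ≤ η ^ 2)
    (hgf : ∀ k, |g k - A f k| ≤ η)
    (hconc : 𝔼 k, (A v k - A f k) ^ 2 ≤ 4 / 3 * 𝔼 i, (A v (z i) - A f (z i)) ^ 2 + δ)
    (htδ : 14 / 3 * (‖A‖ ^ 2 * M * t) + δ ≤ σ ^ 2 * ε) :
    𝔼 k, (u k - f k) ^ 2 ≤ ε + 16 / 3 * η ^ 2 / σ ^ 2 := by
  set γ := 2 * (‖A‖ * M) * (‖A‖ * t) with hγ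
  have hclose (k : X) : |(A u k - A f k) ^ 2 - (A v k - A f k) ^ 2| ≤ γ :=
    (abs_sq_residual_sub_le A hM hu hv hf k).trans (by rw [hγ]; gcongr)
  have herr : σ ^ 2 * 𝔼 k, (u k - f k) ^ 2 ≤ σ ^ 2 * ε + 16 / 3 * η ^ 2 :=
    calc σ ^ 2 * 𝔼 k, (u k - f k) ^ 2 ≤ 𝔼 k, (A u k - A f k) ^ 2 := by
          simpa only [map_sub, Pi.sub_apply] using sq_mul_expect_sq_le hσ.le (hσA (u - f))
      _ ≤ 𝔼 k, (A v k - A f k) ^ 2 + γ :=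
          expect_le_expect_add_of_le fun k => by linarith [(abs_le.mp (hclose k)).2]
      _ ≤ 4 / 3 * 𝔼 i, (A v (z i) - A f (z i)) ^ 2 + δ + γ := by linarith
      _ ≤ 4 / 3 * (𝔼 i, (A u (z i) - A f (z i)) ^ 2 + γ) + δ + γ := by
          gcongr
          exact expect_le_expect_add_of_le fun i => by linarith [(abs_le.mp (hclose (z i))).1]
      _ ≤ 4 / 3 * (4 * η ^ 2 + γ) + δ + γ := by
          gcongr
          exact expect_sq_sub_le_four_mul hfit fun i => hgf (z i)
      _ ≤ σ ^ 2 * ε + 16 / 3 * η ^ 2 := by linarith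
  have hσ2 : 0 < σ ^ 2 := by positivity
  calc 𝔼 k, (u k - f k) ^ 2 ≤ (σ ^ 2 * ε + 16 / 3 * η ^ 2) / σ ^ 2 := by
        rw [le_div_iff₀ hσ2]
        linarith
    _ = ε + 16 / 3 * η ^ 2 / σ ^ 2 := by field_simp

end Operator

theorem stmt0_general (N : ℕ) [NeZero N] (r : ℕ) (L : ℕ)
    (M : ℝ) (hM : 0 < M)
    (lam : ℕ → ℕ × ℕ → ZMod N × ZMod N → ℝ)
    (A : (ZMod N × ZMod N → ℝ) →L[ℝ] (ZMod N × ZMod N → ℝ)) (hA : 0 < ‖A‖)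
    (σ : ℝ) (hσ : 0 < σ)
    (hσA : ∀ v : ZMod N × ZMod N → ℝ,
      σ * Real.sqrt (∑ k, v k ^ 2) ≤ Real.sqrt (∑ k, A v k ^ 2))
    (g : ZMod N × ZMod N → ℝ) (η : ℝ)
    (f : ZMod N × ZMod N → ℝ) (hfM : ∀ k, f k ∈ Set.Icc (0 : ℝ) M)
    (hgf : ∀ k, |g k - A f k| ≤ η)
    (m : ℕ) (hm : 1 ≤ m)
    (usel : (Fin m → ZMod N × ZMod N) → (ZMod N × ZMod N → ℝ))
    (husel : ∀ z : Fin m → ZMod N × ZMod N,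
      (∀ k, usel z k ∈ Set.Icc (0 : ℝ) M) ∧
      (1 / (m : ℝ)) * ∑ i, (A (usel z) (z i) - g (z i)) ^ 2 ≤ η ^ 2 ∧
      ∀ u : ZMod N × ZMod N → ℝ, (∀ k, u k ∈ Set.Icc (0 : ℝ) M) →
        (1 / (m : ℝ)) * ∑ i, (A u (z i) - g (z i)) ^ 2 ≤ η ^ 2 →
        wnormW r N L lam (usel z) ≤ wnormW r N L lam u)
    (ε : ℝ) (hε : 0 < ε) :
    prob {z : Fin m → ZMod N × ZMod N |
        (1 / ((N : ℝ) ^ 2)) * ∑ k, (usel z k - f k) ^ 2 ≤ ε + (16 / 3) * η ^ 2 / σ ^ 2} ≥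
      1 - (coverNum M (σ ^ 2 * ε / (12 * ‖A‖ ^ 2 * M))
            {u : ZMod N × ZMod N → ℝ | (∀ k, u k ∈ Set.Icc (0 : ℝ) M) ∧
              wnormW r N L lam u ≤ wnormW r N L lam f} : ℝ) *
          Real.exp (-(3 * m * σ ^ 2 * ε) / (256 * ‖A‖ ^ 2 * M ^ 2)) := by
  have : Nonempty (Fin m) := ⟨⟨0, hm⟩⟩
  have hsample (a : Fin m → ℝ) : 1 / (m : ℝ) * ∑ i, a i = 𝔼 i, a i :=
    (expect_eq_one_div_mul_sum (by simp) a).symm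
  have hcard : (Fintype.card (ZMod N × ZMod N) : ℝ) = (N : ℝ) ^ 2 := by simp [sq]
  set t := σ ^ 2 * ε / (12 * ‖A‖ ^ 2 * M) with ht
  set S₀ := {u : ZMod N × ZMod N → ℝ | (∀ k, u k ∈ Set.Icc (0 : ℝ) M) ∧
    wnormW r N L lam u ≤ wnormW r N L lam f}
  obtain ⟨v, hv, hcover⟩ := exists_cover_coverNum (by positivity : 0 < t) (S := S₀)
    fun u hu => hu.1
  set Bad := {z : Fin m → ZMod N × ZMod N | ∃ j, 4 / 3 * 𝔼 i, (A (v j) (z i) - A f (z i)) ^ 2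
    + σ ^ 2 * ε / 16 < 𝔼 k, (A (v j) k - A f k) ^ 2}
  have hBad : prob Bad ≤ coverNum M t S₀ *
      exp (-(3 * m * σ ^ 2 * ε) / (256 * ‖A‖ ^ 2 * M ^ 2)) := by
    have hξ (j) (k) : (A (v j) k - A f k) ^ 2 ∈ Set.Icc 0 ((‖A‖ * M) ^ 2) :=
      ⟨sq_nonneg _,
        (abs_le.1 (abs_apply_sub_apply_le_of_mem_Icc A hM.le (hv j) hfM k)).elim sq_le_sq'⟩
    refine (prob_exists_expect_lt_le (by positivity) hξ _).trans_eq ?_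
    rw [Fintype.card_fin]
    congr 2
    ring
  have hGood : Badᶜ ⊆ {z : Fin m → ZMod N × ZMod N |
      (1 / ((N : ℝ) ^ 2)) * ∑ k, (usel z k - f k) ^ 2 ≤ ε + (16 / 3) * η ^ 2 / σ ^ 2} := by
    intro z hz
    obtain ⟨hu, hfit, hmin⟩ := husel z
    have hffit : 𝔼 i, (A f (z i) - g (z i)) ^ 2 ≤ η ^ 2 := expect_le univ_nonempty fun i _ =>
      (abs_le.1 (abs_sub_comm (g (z i)) _ ▸ hgf (z i))).elim sq_le_sq'
    obtain ⟨j, hj⟩ := hcover (usel z) ⟨hu, hmin f hfM (by rwa [hsample])⟩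
    have htδ : 14 / 3 * (‖A‖ ^ 2 * M * t) + σ ^ 2 * ε / 16 ≤ σ ^ 2 * ε := by
      have hAMt : ‖A‖ ^ 2 * M * t = σ ^ 2 * ε / 12 := by
        rw [ht]
        field_simp
      linarith [mul_pos (pow_pos hσ 2) hε]
    rw [Set.mem_ofPred_eq, ← expect_eq_one_div_mul_sum hcard]
    exact expect_sq_sub_le_of_near A hσ hσA hM.le hu (hv j) hfM
      ((pi_norm_le_iff_of_nonneg (by positivity)).2 hj) z (by rwa [← hsample]) hgf
      (not_lt.mp fun h => hz ⟨j, h⟩) htδ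
  calc 1 - coverNum M t S₀ * exp (-(3 * m * σ ^ 2 * ε) / (256 * ‖A‖ ^ 2 * M ^ 2))
      ≤ 1 - prob Bad := by linarith
    _ = prob Badᶜ := (prob_compl Bad).symm
    _ ≤ _ := prob_mono hGood

/-- Theorem 2.1 — error probability bound via covering numbers.
`A` is a linear operator on `ℝ^Ω` (as a continuous linear map for the ℓ∞ norm, so that
`‖A‖` is the ℓ∞ operator norm), `σ > 0` satisfies `σ‖v‖₂ ≤ ‖Av‖₂`, the data satisfy
`|g[k] − (Af)[k]| ≤ η` for all `k`, and `usel` is any selection of minimizers of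
`‖λ·W·‖₁` over `F(z)`.  Then with probability (over i.i.d. uniform samples `z ∈ Ω^m`)
at least `1 − N(S₀, σ²ε/(12‖A‖²M))·exp(−3mσ²ε/(256‖A‖²M²))` one has
`(1/|Ω|)‖u^z − f‖₂² ≤ ε + (16/3)σ⁻²η²`. -/
theorem stmt0 (N : ℕ) (hN : 2 ≤ N) [NeZero N] (r : ℕ) (hr : 1 ≤ r) (L : ℕ) (hL : 1 ≤ L)
    (M : ℝ) (hM : 0 < M)
    (lam : ℕ → ℕ × ℕ → ZMod N × ZMod N → ℝ) (hlam : ∀ l α k, 0 ≤ lam l α k)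
    (A : (ZMod N × ZMod N → ℝ) →L[ℝ] (ZMod N × ZMod N → ℝ)) (hA : 0 < ‖A‖)
    (σ : ℝ) (hσ : 0 < σ)
    (hσA : ∀ v : ZMod N × ZMod N → ℝ,
      σ * Real.sqrt (∑ k, v k ^ 2) ≤ Real.sqrt (∑ k, A v k ^ 2))
    (g : ZMod N × ZMod N → ℝ) (η : ℝ) (hη : 0 ≤ η)
    (f : ZMod N × ZMod N → ℝ) (hfM : ∀ k, f k ∈ Set.Icc (0 : ℝ) M)
    (hgf : ∀ k, |g k - A f k| ≤ η)
    (m : ℕ) (hm : 1 ≤ m)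
    (usel : (Fin m → ZMod N × ZMod N) → (ZMod N × ZMod N → ℝ))
    (husel : ∀ z : Fin m → ZMod N × ZMod N,
      (∀ k, usel z k ∈ Set.Icc (0 : ℝ) M) ∧
      (1 / (m : ℝ)) * ∑ i, (A (usel z) (z i) - g (z i)) ^ 2 ≤ η ^ 2 ∧
      ∀ u : ZMod N × ZMod N → ℝ, (∀ k, u k ∈ Set.Icc (0 : ℝ) M) →
        (1 / (m : ℝ)) * ∑ i, (A u (z i) - g (z i)) ^ 2 ≤ η ^ 2 →
        wnormW r N L lam (usel z) ≤ wnormW r N L lam u)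
    (ε : ℝ) (hε : 0 < ε) :
    prob {z : Fin m → ZMod N × ZMod N |
        (1 / ((N : ℝ) ^ 2)) * ∑ k, (usel z k - f k) ^ 2 ≤ ε + (16 / 3) * η ^ 2 / σ ^ 2} ≥
      1 - (coverNum M (σ ^ 2 * ε / (12 * ‖A‖ ^ 2 * M))
            {u : ZMod N × ZMod N → ℝ | (∀ k, u k ∈ Set.Icc (0 : ℝ) M) ∧
              wnormW r N L lam u ≤ wnormW r N L lam f} : ℝ) *
          Real.exp (-(3 * m * σ ^ 2 * ε) / (256 * ‖A‖ ^ 2 * M ^ 2)) :=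
  stmt0_general N r L M hM lam A hA σ hσ hσA g η f hfM hgf m hm usel husel ε hε

end WFrame
end
end

section
/- Assume M ≥ 1, and let C_W ≥ 1 be a constant such that ‖∇u‖₁ ≤ C_W·‖Wu‖₁ for all u : Ω → ℝ. Assume the weights satisfy λ_{l,α}[k] = 2^{β·Υ(l,α,k)} with β ∈ [−1,1], where Υ takes values in {1,2,3,…} and Υ(l,α,k) ≤ log₂N for all (l,α,k), and assume f ∈ [0,M]^Ω satisfies ‖λ·Wf‖₁ ≤ C_f·|Ω|^{1/2} with C_f ≥ 1. Let S₀ = {u ∈ [0,M]^Ω : ‖λ·Wu‖₁ ≤ ‖λ·Wf‖₁}. Then for every a ≥ 1 and every radius t ≥ |Ω|^{−a}, ln N(S₀, t) ≤ (C_a/t)·|Ω|^{b/2}·log₂|Ω|, where b = max{1−β, 1} and C_a = 20·M·(4a+b)·C_W·C_f·(1 + C_W·C_f). -/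
noncomputable section

open scoped BigOperators

/-!
The weights satisfy `λ ≥ N ^ min β 0`, so every `u ∈ S₀` has
`‖Wu‖₁ ≤ N ^ (-min β 0) ‖λ·Wf‖₁ ≤ C_f N ^ b`, hence total variation at most `V = C_W C_f N ^ b`.
A boustrophedon path visits all `N²` grid points through `N² - 1` adjacent steps, so the values of
`u` along it form a sequence of variation at most `V`. Quantizing that sequence greedily with step
`t` gives an integer sequence, `t`-close to it, whose start lies in `[0, M / t]` and whose
increments have `ℓ¹`-norm at most `V / t + 1`, i.e. are a list of `⌊V / t⌋ + 1` signed unit moves.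
Hence `N(S₀, t) ≤ (M / t + 1) (2N² - 1) ^ (V / t + 1)`, and taking logarithms gives the bound.
-/

namespace WFrame

open Finset

def truncZero (x : ℝ) : ℤ := if 0 ≤ x then ⌊x⌋ else -⌊-x⌋

lemma abs_truncZero_add_abs_sub (x : ℝ) : |(truncZero x : ℝ)| + |x - truncZero x| = |x| := by
  unfold truncZero
  split_ifs with hx
  · have h0 : (0 : ℝ) ≤ ⌊x⌋ := by exact_mod_cast Int.floor_nonneg.mpr hx
    have h1 := Int.floor_le x
    rw [abs_of_nonneg h0, abs_of_nonneg (by linarith), abs_of_nonneg hx]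
    ring
  · have h0 : (0 : ℝ) ≤ ⌊-x⌋ := by exact_mod_cast Int.floor_nonneg.mpr (by linarith)
    have h1 := Int.floor_le (-x)
    push_cast
    rw [abs_neg, abs_of_nonneg h0, abs_of_nonpos (by linarith), abs_of_neg (by linarith)]
    ring

lemma abs_sub_truncZero_lt_one (x : ℝ) : |x - truncZero x| < 1 := by
  unfold truncZero
  split_ifs with hx
  · rw [abs_of_nonneg (sub_nonneg.mpr (Int.floor_le x))]
    linarith [Int.lt_floor_add_one x]
  · have h1 := Int.floor_le (-x)
    push_cast
    rw [abs_of_nonpos (by linarith)]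
    linarith [Int.lt_floor_add_one (-x)]

lemma truncZero_div_spec {t : ℝ} (ht : 0 < t) (y : ℝ) :
    t * |(truncZero (y / t) : ℝ)| + |y - t * truncZero (y / t)| = |y| ∧
      |y - t * truncZero (y / t)| < t := by
  have hy : y - t * truncZero (y / t) = t * (y / t - truncZero (y / t)) := by
    field_simp
  rw [hy, abs_mul, abs_of_pos ht]
  constructor
  · rw [← mul_add, abs_truncZero_add_abs_sub, abs_div, abs_of_pos ht]
    field_simp
  · simpa using mul_lt_mul_of_pos_left (abs_sub_truncZero_lt_one (y / t)) ht

def greedy (t : ℝ) (w : ℕ → ℝ) : ℕ → ℤ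
  | 0 => ⌊w 0 / t⌋
  | s + 1 => greedy t w s + truncZero ((w (s + 1) - t * greedy t w s) / t)

lemma greedy_succ_spec {t : ℝ} (ht : 0 < t) (w : ℕ → ℝ) (s : ℕ) :
    t * |((greedy t w (s + 1) - greedy t w s : ℤ) : ℝ)| + |w (s + 1) - t * greedy t w (s + 1)| =
        |w (s + 1) - t * greedy t w s| ∧
      |w (s + 1) - t * greedy t w (s + 1)| < t := by
  have h := truncZero_div_spec ht (w (s + 1) - t * greedy t w s)
  simp only [greedy, Int.cast_add, add_sub_cancel_left, mul_add, ← sub_sub] at h ⊢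
  exact h

lemma abs_sub_mul_greedy_le {t : ℝ} (ht : 0 < t) (w : ℕ → ℝ) :
    ∀ s, |w s - t * greedy t w s| ≤ t
  | 0 => by
    have h := Int.floor_le (w 0 / t)
    have h' := Int.lt_floor_add_one (w 0 / t)
    rw [greedy, abs_of_nonneg] <;>
      nlinarith [mul_div_cancel₀ (w 0) ht.ne']
  | s + 1 => (greedy_succ_spec ht w s).2.le

/-- Greedy quantization pays for each step of the path only its actual variation: the errors
telescope, leaving a single extra `t`. -/
lemma mul_sum_abs_greedy_sub_le {t : ℝ} (ht : 0 < t) (w : ℕ → ℝ) (m : ℕ) :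
    t * ∑ s ∈ range m, |((greedy t w (s + 1) - greedy t w s : ℤ) : ℝ)| ≤
      ∑ s ∈ range m, |w (s + 1) - w s| + t := by
  have key : ∀ m, t * ∑ s ∈ range m, |((greedy t w (s + 1) - greedy t w s : ℤ) : ℝ)| +
      |w m - t * greedy t w m| ≤ ∑ s ∈ range m, |w (s + 1) - w s| + |w 0 - t * greedy t w 0| := by
    intro m
    induction m with
    | zero => simp
    | succ m ih =>
      have hstep := (greedy_succ_spec ht w m).1
      have htri : |w (m + 1) - t * greedy t w m| ≤ |w (m + 1) - w m| + |w m - t * greedy t w m| :=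
        abs_sub_le _ _ _
      rw [sum_range_succ, sum_range_succ, mul_add]
      linarith
  linarith [key m, abs_sub_mul_greedy_le ht w 0, abs_nonneg (w m - t * greedy t w m)]

def unitMove {m : ℕ} : Option (Fin m × Bool) → Fin m → ℤ
  | none => 0
  | some (i, b) => Pi.single i (if b then 1 else -1)

def sumMoves {m S : ℕ} (e : Fin S → Option (Fin m × Bool)) : Fin m → ℤ :=
  ∑ s, unitMove (e s)

lemma sumMoves_snoc {m S : ℕ} (e : Fin S → Option (Fin m × Bool)) (x : Option (Fin m × Bool)) :
    sumMoves (Fin.snoc e x) = sumMoves e + unitMove x := by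
  simp [sumMoves, Fin.sum_univ_castSucc]

lemma exists_sumMoves_eq {m : ℕ} (S : ℕ) (d : Fin m → ℤ) (hd : ∑ i, |d i| ≤ S) :
    ∃ e : Fin S → Option (Fin m × Bool), sumMoves e = d := by
  induction S generalizing d with
  | zero =>
    refine ⟨Fin.elim0, funext fun i => ?_⟩
    have := single_le_sum (fun j _ => abs_nonneg (d j)) (mem_univ i)
    simp only [sumMoves, univ_eq_empty, sum_empty, Pi.zero_apply]
    push_cast at hd
    exact (abs_nonpos_iff.mp (by linarith)).symm
  | succ S ih =>
    by_cases hd0 : d = 0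
    · exact ⟨fun _ => none, by simp [sumMoves, unitMove, hd0]⟩
    obtain ⟨i₀, hi₀ : d i₀ ≠ 0⟩ := Function.ne_iff.mp hd0
    set x : Option (Fin m × Bool) := some (i₀, decide (0 < d i₀))
    have hsum : ∑ i, |(d - unitMove x) i| + 1 = ∑ i, |d i| := by
      rw [← Fintype.sum_pi_single' i₀ (1 : ℤ), ← sum_add_distrib]
      refine sum_congr rfl fun i _ => ?_
      rcases eq_or_ne i i₀ with rfl | hi
      · simp only [x, unitMove, Pi.sub_apply, Pi.single_eq_same, decide_eq_true_eq]
        split_ifs with h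
        · rw [abs_of_pos h, abs_of_nonneg (by omega : 0 ≤ d i - 1)]; ring
        · rw [abs_of_neg (by omega : d i < 0), abs_of_nonpos (by omega : d i - -1 ≤ 0)]; ring
      · simp [x, unitMove, Pi.single_eq_of_ne hi]
    obtain ⟨e, he⟩ := ih (d - unitMove x) (by push_cast at hd; linarith)
    exact ⟨Fin.snoc e x, by rw [sumMoves_snoc, he, sub_add_cancel]⟩

lemma coverNum_le_card {X ι : Type*} [Fintype ι] {M t : ℝ} {S : Set (X → ℝ)} (v : ι → X → ℝ)
    (hv : ∀ i x, v i x ∈ Set.Icc 0 M) (hS : ∀ u ∈ S, ∃ i, ∀ x, |u x - v i x| ≤ t) :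
    coverNum M t S ≤ Fintype.card ι := by
  let e := Fintype.equivFin ι
  refine Nat.sInf_le ⟨fun j => v (e.symm j), fun j x => hv _ x, fun u hu => ?_⟩
  obtain ⟨i, hi⟩ := hS u hu
  exact ⟨e i, by simpa using hi⟩

lemma coverNum_le_one {X : Type*} {M t : ℝ} {S : Set (X → ℝ)} (hM : 0 ≤ M) (hMt : M ≤ 2 * t)
    (hS : ∀ u ∈ S, ∀ x, u x ∈ Set.Icc 0 M) : coverNum M t S ≤ 1 := by
  refine (coverNum_le_card (ι := Unit) (fun _ _ => M / 2) (fun _ _ => ⟨by linarith, by linarith⟩)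
    fun u hu => ⟨(), fun x => ?_⟩).trans_eq Fintype.card_unit
  obtain ⟨h0, hM⟩ := hS u hu x
  rw [abs_le]
  constructor <;> linarith

lemma sum_range_telescope_of_fin {m s : ℕ} (hs : s ≤ m) (c : ℕ → ℤ) (d : Fin m → ℤ)
    (hd : ∀ j : Fin m, d j = c (j + 1) - c j) :
    ∑ j ∈ range s, (if h : j < m then d ⟨j, h⟩ else 0) = c s - c 0 := by
  rw [← sum_range_sub c]
  refine sum_congr rfl fun j hj => ?_
  rw [dif_pos ((mem_range.mp hj).trans_le hs), hd]

lemma sum_abs_greedy_sub_le {t V : ℝ} (ht : 0 < t) (hV : 0 ≤ V) (w : ℕ → ℝ) (m : ℕ)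
    (hw : ∑ s ∈ range m, |w (s + 1) - w s| ≤ V) :
    ∑ j : Fin m, |greedy t w (j + 1) - greedy t w j| ≤ (⌊V / t⌋₊ + 1 : ℕ) := by
  have h := mul_sum_abs_greedy_sub_le ht w m
  rw [← Fin.sum_univ_eq_sum_range (fun j => |((greedy t w (j + 1) - greedy t w j : ℤ) : ℝ)|)] at h
  have hreal : ((∑ j : Fin m, |greedy t w (j + 1) - greedy t w j| : ℤ) : ℝ) ≤ V / t + 1 := by
    rw [div_add_one ht.ne', le_div_iff₀ ht]
    push_cast at h ⊢
    linarith
  push_cast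
  rw [Int.natCast_floor_eq_floor (div_nonneg hV ht.le), ← Int.floor_add_one]
  exact Int.le_floor.mpr hreal

theorem coverNum_le_of_path {X : Type*} {M t V : ℝ} (hM : 0 ≤ M) (ht : 0 < t) (hV : 0 ≤ V)
    (γ : ℕ → X) (m : ℕ) (hγ : ∀ x, ∃ s ≤ m, γ s = x) (S : Set (X → ℝ))
    (hS : ∀ u ∈ S, (∀ x, u x ∈ Set.Icc 0 M) ∧ ∑ s ∈ range m, |u (γ (s + 1)) - u (γ s)| ≤ V) :
    coverNum M t S ≤ (⌊M / t⌋₊ + 1) * (2 * m + 1) ^ (⌊V / t⌋₊ + 1) := by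
  choose idx hidx_le hidx using hγ
  set n := ⌊V / t⌋₊ + 1
  -- a code is a quantized start value and the increments along `γ`, as signed unit moves
  let center : Fin (⌊M / t⌋₊ + 1) × (Fin n → Option (Fin m × Bool)) → X → ℝ := fun p x =>
    Set.projIcc 0 M hM
      (t * ((p.1 : ℤ) + ∑ j ∈ range (idx x), if h : j < m then sumMoves p.2 ⟨j, h⟩ else 0 : ℤ))
  refine (coverNum_le_card center (fun _ _ => Subtype.prop _) fun u hu => ?_).trans_eq
    (by simp; ring)
  obtain ⟨hu, huV⟩ := hS u hu
  set c := greedy t (u ∘ γ)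
  obtain ⟨e, he⟩ := exists_sumMoves_eq n _ (sum_abs_greedy_sub_le ht hV (u ∘ γ) m huV)
  have hc0 : ((⌊u (γ 0) / t⌋₊ : ℕ) : ℤ) = c 0 :=
    Int.natCast_floor_eq_floor (div_nonneg (hu (γ 0)).1 ht.le)
  let k₀ : Fin (⌊M / t⌋₊ + 1) := ⟨⌊u (γ 0) / t⌋₊, Nat.lt_succ_of_le
    (Nat.floor_le_floor (div_le_div_of_nonneg_right (hu (γ 0)).2 ht.le))⟩
  refine ⟨(k₀, e), fun x => ?_⟩
  have hcenter : center (k₀, e) x = (Set.projIcc 0 M hM (t * c (idx x)) : ℝ) := by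
    simp only [center, k₀, hc0, sum_range_telescope_of_fin (hidx_le x) c _ (fun j => congrFun he j),
      add_sub_cancel]
  calc |u x - center _ x|
      = |(Set.projIcc 0 M hM (u x) : ℝ) - Set.projIcc 0 M hM (t * c (idx x))| := by
        rw [hcenter, Set.projIcc_of_mem _ (hu x)]
    _ ≤ |u x - t * c (idx x)| := Set.abs_projIcc_sub_projIcc hM
    _ ≤ t := by simpa [hidx x] using abs_sub_mul_greedy_le ht (u ∘ γ) (idx x)

lemma sum_range_rows {M : Type*} [AddCommMonoid M] (f : ℕ → M) (n K : ℕ) :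
    ∑ s ∈ range (n * (K + 1) + K), f s =
      ∑ i ∈ range (n + 1), ∑ j ∈ range K, f (i * (K + 1) + j) +
        ∑ i ∈ range n, f (i * (K + 1) + K) := by
  induction n with
  | zero => simp
  | succ n ih =>
    have hshift : ∀ x, n * (K + 1) + K + 1 + x = (n + 1) * (K + 1) + x := fun x => by ring
    rw [show (n + 1) * (K + 1) + K = n * (K + 1) + K + 1 + K by ring, sum_range_add,
      sum_range_succ, ih, sum_range_succ _ (n + 1), sum_range_succ (fun i => f (i * (K + 1) + K)) n]
    simp only [hshift]
    abel

/-- Boustrophedon order: row `i` is traversed left to right for even `i`, right to left for odd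
`i`, so consecutive points of `snake N` are always grid neighbours. -/
def snakeJ (N i j : ℕ) : ℕ := if i % 2 = 0 then j else N - 1 - j

def snake (N s : ℕ) : ZMod N × ZMod N := ((s / N : ℕ), (snakeJ N (s / N) (s % N) : ℕ))

lemma snakeJ_lt {N i j : ℕ} (hj : j < N) : snakeJ N i j < N := by
  unfold snakeJ; split <;> omega

lemma snakeJ_snakeJ {N i j : ℕ} (hj : j < N) : snakeJ N i (snakeJ N i j) = j := by
  unfold snakeJ; split <;> omega

lemma snake_mul_add {N i j : ℕ} (hj : j < N) :
    snake N (i * N + j) = ((i : ZMod N), (snakeJ N i j : ZMod N)) := by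
  have hdiv : (i * N + j) / N = i := by
    rw [add_comm, Nat.add_mul_div_right _ _ (by omega), Nat.div_eq_of_lt hj, zero_add]
  have hmod : (i * N + j) % N = j := by
    rw [add_comm, Nat.add_mul_mod_self_right, Nat.mod_eq_of_lt hj]
  simp only [snake, hdiv, hmod]

lemma exists_snake_eq (N : ℕ) [NeZero N] (k : ZMod N × ZMod N) :
    ∃ s ≤ N * N - 1, snake N s = k := by
  have hJ := snakeJ_lt (i := k.1.val) (ZMod.val_lt k.2)
  refine ⟨k.1.val * N + snakeJ N k.1.val k.2.val, ?_, ?_⟩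
  · have := ZMod.val_lt k.1
    have : (k.1.val + 1) * N ≤ N * N := Nat.mul_le_mul_right N this
    rw [add_mul, one_mul] at this
    omega
  · rw [snake_mul_add hJ, snakeJ_snakeJ (ZMod.val_lt k.2)]
    simp

lemma sum_abs_snake_row (N : ℕ) (u : ZMod N × ZMod N → ℝ) (i : ℕ) :
    ∑ j ∈ range (N - 1), |u (snake N (i * N + j + 1)) - u (snake N (i * N + j))| =
      ∑ j ∈ range (N - 1), |u ((i : ZMod N), (j : ZMod N) + 1) - u (i, j)| := by
  have hrow : ∀ j ∈ range (N - 1), |u (snake N (i * N + j + 1)) - u (snake N (i * N + j))| =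
      |u (i, (snakeJ N i (j + 1) : ZMod N)) - u (i, (snakeJ N i j : ZMod N))| := fun j hj => by
    rw [mem_range] at hj
    rw [add_assoc, snake_mul_add (by omega), snake_mul_add (by omega)]
  rw [sum_congr rfl hrow]
  unfold snakeJ
  split_ifs with hi
  · push_cast
    rfl
  · rw [← sum_range_reflect (fun j => |u ((i : ZMod N), (j : ZMod N) + 1) - u (i, j)|)]
    refine sum_congr rfl fun j hj => ?_
    rw [mem_range] at hj
    rw [abs_sub_comm, show N - 1 - (j + 1) = N - 1 - 1 - j by omega,
      show N - 1 - j = N - 1 - 1 - j + 1 by omega, Nat.cast_succ]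

lemma abs_snake_row_change_le {N : ℕ} (hN : 2 ≤ N) (u : ZMod N × ZMod N → ℝ) (i : ℕ) :
    |u (snake N (i * N + (N - 1) + 1)) - u (snake N (i * N + (N - 1)))| ≤
      ∑ j ∈ range N, |u ((i : ZMod N) + 1, (j : ZMod N)) - u ((i : ZMod N), (j : ZMod N))| := by
  have hnext : i * N + (N - 1) + 1 = (i + 1) * N + 0 := by
    rw [add_mul, one_mul]
    omega
  have hJ : snakeJ N (i + 1) 0 = snakeJ N i (N - 1) := by
    unfold snakeJ
    split_ifs <;> omega
  rw [hnext, snake_mul_add (by omega), snake_mul_add (by omega), hJ, Nat.cast_succ]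
  exact single_le_sum (f := fun j : ℕ => |u ((i : ZMod N) + 1, (j : ZMod N)) - u (i, j)|)
    (fun j _ => abs_nonneg _) (mem_range.mpr (snakeJ_lt (by omega)))

theorem sum_abs_snake_sub_le_tv {N : ℕ} (hN : 2 ≤ N) [NeZero N] (u : ZMod N × ZMod N → ℝ) :
    ∑ s ∈ range (N * N - 1), |u (snake N (s + 1)) - u (snake N s)| ≤ tv N u := by
  have hrows := sum_range_rows (fun s => |u (snake N (s + 1)) - u (snake N s)|) (N - 1) (N - 1)
  rw [Nat.sub_add_cancel (by omega : 1 ≤ N)] at hrows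
  rw [show N * N - 1 = (N - 1) * N + (N - 1) by
    have := Nat.sub_one_mul N N
    have := Nat.le_mul_self N
    omega, hrows, tv]
  exact (add_le_add (sum_le_sum fun i _ => (sum_abs_snake_row N u i).le)
    (sum_le_sum fun i _ => abs_snake_row_change_le hN u i)).trans_eq (add_comm _ _)

lemma rpow_min_le_two_rpow_mul {n β x : ℝ} (hn : 0 < n) (hx : 0 ≤ x) (hxn : x ≤ Real.logb 2 n) :
    n ^ min β 0 ≤ 2 ^ (β * x) := by
  rcases le_total 0 β with hβ | hβ
  · rw [min_eq_right hβ, Real.rpow_zero]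
    exact Real.one_le_rpow one_le_two (mul_nonneg hβ hx)
  · rw [min_eq_left hβ, ← Real.rpow_logb two_pos (by norm_num) hn, ← Real.rpow_mul two_pos.le,
      mul_comm]
    exact Real.rpow_le_rpow_of_exponent_le one_le_two (mul_le_mul_of_nonpos_left hxn hβ)

lemma mul_wnorm1_le_wnormW {r N L : ℕ} [NeZero N] {lam : ℕ → ℕ × ℕ → ZMod N × ZMod N → ℝ}
    {c : ℝ} (hc : ∀ l α k, c ≤ lam l α k) (u : ZMod N × ZMod N → ℝ) :
    c * wnorm1 r N L u ≤ wnormW r N L lam u := by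
  simp only [wnorm1, wnormW, mul_sum]
  gcongr with k _ l _ α _
  exact hc l α k

lemma tv_le_of_wnormW_le {r N L : ℕ} [NeZero N] {CW Cf β : ℝ}
    {lam : ℕ → ℕ × ℕ → ZMod N × ZMod N → ℝ}
    (hCW : ∀ u, tv N u ≤ CW * wnorm1 r N L u) (hCW0 : 0 ≤ CW)
    (hlam : ∀ l α k, (N : ℝ) ^ min β 0 ≤ lam l α k) {u : ZMod N × ZMod N → ℝ}
    (hu : wnormW r N L lam u ≤ Cf * N) :
    tv N u ≤ CW * Cf * (N : ℝ) ^ max (1 - β) 1 := by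
  have hN : (0 : ℝ) < N := by exact_mod_cast NeZero.pos N
  have hpow := Real.rpow_pos_of_pos hN (min β 0)
  have hwnorm1 : wnorm1 r N L u ≤ Cf * N / N ^ min β 0 := by
    rw [le_div_iff₀ hpow, mul_comm]
    exact (mul_wnorm1_le_wnormW hlam u).trans hu
  have hexp : max (1 - β) 1 = 1 - min β 0 := by rw [← max_sub_sub_left, sub_zero]
  calc tv N u ≤ CW * wnorm1 r N L u := hCW u
    _ ≤ CW * (Cf * N / N ^ min β 0) := by gcongr
    _ = CW * Cf * (N : ℝ) ^ max (1 - β) 1 := by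
      rw [hexp, Real.rpow_sub hN, Real.rpow_one]
      ring

lemma log_floor_add_one_mul_pow_le {x y : ℝ} (hx : 0 ≤ x) (hy : 0 ≤ y) (m : ℕ) :
    Real.log (((⌊x⌋₊ + 1) * (2 * m + 1) ^ (⌊y⌋₊ + 1) : ℕ) : ℝ) ≤
      x + (y + 1) * Real.log (2 * m + 1) := by
  push_cast
  rw [Real.log_mul (by positivity) (by positivity), Real.log_pow]
  have hfloor : Real.log (⌊x⌋₊ + 1) ≤ x :=
    (Real.log_le_sub_one_of_pos (by positivity)).trans (by linarith [Nat.floor_le hx])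
  have hexp : ((⌊y⌋₊ + 1 : ℕ) : ℝ) ≤ y + 1 := by
    push_cast
    linarith [Nat.floor_le hy]
  have hlog : 0 ≤ Real.log (2 * m + 1) := Real.log_nonneg (by linarith [m.cast_nonneg (α := ℝ)])
  linarith [mul_le_mul_of_nonneg_right hexp hlog]

lemma log_natCast_le_log_natCast {a b : ℕ} (h : a ≤ b) : Real.log a ≤ Real.log b := by
  rcases Nat.eq_zero_or_pos a with rfl | ha
  · simpa using Real.log_natCast_nonneg b
  · exact Real.log_le_log (by exact_mod_cast ha) (by exact_mod_cast h)

lemma log_two_mul_sq_sub_one_le {N : ℕ} (hN : 2 ≤ N) :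
    Real.log (2 * ((N * N - 1 : ℕ) : ℝ) + 1) ≤ 4 * Real.logb 2 N := by
  have hle : 2 * (N * N - 1) + 1 ≤ N ^ 4 := by
    have : 2 ≤ N * N := by nlinarith
    have : 2 * (N * N) ≤ N * N * (N * N) := Nat.mul_le_mul_right _ this
    rw [show N ^ 4 = N * N * (N * N) by ring]
    omega
  have hlogN : Real.log N ≤ Real.logb 2 N := by
    rw [Real.logb, le_div_iff₀ (Real.log_pos one_lt_two)]
    have := Real.log_two_lt_d9
    have := Real.log_nonneg (by exact_mod_cast (by omega : 1 ≤ N) : (1 : ℝ) ≤ N)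
    nlinarith
  calc Real.log (2 * ((N * N - 1 : ℕ) : ℝ) + 1) = Real.log ((2 * (N * N - 1) + 1 : ℕ) : ℝ) := by
        push_cast; rfl
    _ ≤ Real.log ((N ^ 4 : ℕ) : ℝ) := log_natCast_le_log_natCast hle
    _ = 4 * Real.log N := by push_cast; rw [Real.log_pow]; norm_num
    _ ≤ 4 * Real.logb 2 N := by linarith

theorem log_coverNum_le_of_tv_le {N : ℕ} (hN : 2 ≤ N) [NeZero N] {M t V : ℝ} (hM : 1 ≤ M)
    (ht : 0 < t) (hV : 1 ≤ V) {S : Set (ZMod N × ZMod N → ℝ)}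
    (hS : ∀ u ∈ S, (∀ k, u k ∈ Set.Icc 0 M) ∧ tv N u ≤ V) :
    Real.log (coverNum M t S) ≤ 7 * M * V * Real.logb 2 N / t := by
  have hlog : 1 ≤ Real.logb 2 N := by
    rw [Real.le_logb_iff_rpow_le one_lt_two (by positivity), Real.rpow_one]
    exact_mod_cast hN
  by_cases hMt : M ≤ 2 * t
  · have hcov := coverNum_le_one (by linarith) hMt fun u hu => (hS u hu).1
    calc Real.log (coverNum M t S) ≤ 0 :=
          Real.log_nonpos (Nat.cast_nonneg _) (by exact_mod_cast hcov)
      _ ≤ 7 * M * V * Real.logb 2 N / t := by positivity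
  push Not at hMt
  have hcov := coverNum_le_of_path (by linarith) ht (by linarith) (snake N) (N * N - 1)
    (exists_snake_eq N) S fun u hu =>
      ⟨(hS u hu).1, (sum_abs_snake_sub_le_tv hN u).trans (hS u hu).2⟩
  calc Real.log (coverNum M t S)
      ≤ M / t + (V / t + 1) * Real.log (2 * ((N * N - 1 : ℕ) : ℝ) + 1) :=
        (log_natCast_le_log_natCast hcov).trans
          (log_floor_add_one_mul_pow_le (by positivity) (by positivity) _)
    _ ≤ M / t + (V / t + 1) * (4 * Real.logb 2 N) := by
        gcongr
        exact log_two_mul_sq_sub_one_le hN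
    _ = (M + 4 * V * Real.logb 2 N + 4 * Real.logb 2 N * t) / t := by
        field_simp
        ring
    _ ≤ 7 * M * V * Real.logb 2 N / t := by
        gcongr
        have hVL : 1 ≤ V * Real.logb 2 N := one_le_mul_of_one_le_of_one_le hV hlog
        have h1 : M ≤ M * (V * Real.logb 2 N) := le_mul_of_one_le_right (by linarith) hVL
        have h2 : V * Real.logb 2 N ≤ M * (V * Real.logb 2 N) :=
          le_mul_of_one_le_left (by positivity) hM
        have h3 : Real.logb 2 N * (2 * t) ≤ Real.logb 2 N * M := by gcongr
        have h4 : Real.logb 2 N * M ≤ M * (V * Real.logb 2 N) := by nlinarith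
        linarith

theorem stmt2_general (N : ℕ) (hN : 2 ≤ N) [NeZero N] (r : ℕ) (L : ℕ)
    (M : ℝ) (hM : 1 ≤ M)
    (CW : ℝ) (hCW1 : 1 ≤ CW)
    (hCW : ∀ u : ZMod N × ZMod N → ℝ, tv N u ≤ CW * wnorm1 r N L u)
    (β : ℝ)
    (Υ : ℕ → ℕ × ℕ → ZMod N × ZMod N → ℕ)
    (hΥ2 : ∀ l α k, (Υ l α k : ℝ) ≤ Real.logb 2 N)
    (lam : ℕ → ℕ × ℕ → ZMod N × ZMod N → ℝ)
    (hlam : ∀ l α k, lam l α k = (2 : ℝ) ^ (β * (Υ l α k : ℝ)))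
    (Cf : ℝ) (hCf : 1 ≤ Cf)
    (f : ZMod N × ZMod N → ℝ)
    (hf : wnormW r N L lam f ≤ Cf * Real.sqrt ((N : ℝ) ^ 2))
    (a : ℝ) (ha : 1 ≤ a)
    (t : ℝ) (ht : ((N : ℝ) ^ 2) ^ (-a) ≤ t) :
    Real.log (coverNum M t
        {u : ZMod N × ZMod N → ℝ | (∀ k, u k ∈ Set.Icc (0 : ℝ) M) ∧
          wnormW r N L lam u ≤ wnormW r N L lam f}) ≤
      20 * M * (4 * a + max (1 - β) 1) * CW * Cf * (1 + CW * Cf) / t *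
        ((N : ℝ) ^ 2) ^ (max (1 - β) 1 / 2) * Real.logb 2 ((N : ℝ) ^ 2) := by
  set b := max (1 - β) 1
  have hN1 : (1 : ℝ) ≤ N := by exact_mod_cast (by omega : 1 ≤ N)
  have hN0 : (0 : ℝ) < N := by positivity
  have ht0 : 0 < t := (Real.rpow_pos_of_pos (by positivity) _).trans_le ht
  have hb : 1 ≤ b := le_max_right _ _
  have hlam' : ∀ l α k, (N : ℝ) ^ min β 0 ≤ lam l α k := fun l α k =>
    (hlam l α k).symm ▸ rpow_min_le_two_rpow_mul hN0 (Nat.cast_nonneg _) (hΥ2 l α k)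
  have hV : 1 ≤ CW * Cf * (N : ℝ) ^ b := one_le_mul_of_one_le_of_one_le
    (one_le_mul_of_one_le_of_one_le hCW1 hCf) (Real.one_le_rpow hN1 (by linarith))
  have hZ : 0 ≤ M * (CW * Cf * (N : ℝ) ^ b) * Real.logb 2 N / t := by
    have := Real.logb_nonneg one_lt_two hN1
    positivity
  have hconst : 7 ≤ 40 * (4 * a + b) * (1 + CW * Cf) := by
    have h5 : 5 ≤ 4 * a + b := by linarith
    have h2 : 2 ≤ 1 + CW * Cf := by linarith [one_le_mul_of_one_le_of_one_le hCW1 hCf]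
    nlinarith [mul_le_mul h5 h2 (by norm_num) (by linarith)]
  have hpow : ((N : ℝ) ^ 2) ^ (b / 2) = (N : ℝ) ^ b := by
    rw [← Real.rpow_natCast, ← Real.rpow_mul hN0.le]
    congr 1
    push_cast
    ring
  rw [hpow, Real.logb_pow]
  calc _ ≤ 7 * M * (CW * Cf * (N : ℝ) ^ b) * Real.logb 2 N / t :=
        log_coverNum_le_of_tv_le hN hM ht0 hV fun u hu => ⟨hu.1, tv_le_of_wnormW_le hCW
          (by linarith) hlam' (hu.2.trans (hf.trans_eq (by rw [Real.sqrt_sq hN0.le])))⟩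
    _ = 7 * (M * (CW * Cf * (N : ℝ) ^ b) * Real.logb 2 N / t) := by ring
    _ ≤ 40 * (4 * a + b) * (1 + CW * Cf) * (M * (CW * Cf * (N : ℝ) ^ b) * Real.logb 2 N / t) := by
        gcongr
    _ = _ := by push_cast; ring_nf

/-- covering number estimate for
S₀ = {u ∈ [0,M]^Ω : ‖λ·Wu‖₁ ≤ ‖λ·Wf‖₁}:  for a ≥ 1 and t ≥ |Ω|^{−a},
ln N(S₀,t) ≤ (C_a/t)·|Ω|^{b/2}·log₂|Ω| with b = max{1−β,1} and
C_a = 20·M·(4a+b)·C_W·C_f·(1+C_W·C_f). -/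
theorem stmt2 (N : ℕ) (hN : 2 ≤ N) [NeZero N] (r : ℕ) (hr : 1 ≤ r) (L : ℕ) (hL : 1 ≤ L)
    (M : ℝ) (hM : 1 ≤ M)
    (CW : ℝ) (hCW1 : 1 ≤ CW)
    (hCW : ∀ u : ZMod N × ZMod N → ℝ, tv N u ≤ CW * wnorm1 r N L u)
    (β : ℝ) (hβ : -1 ≤ β) (hβ' : β ≤ 1)
    (Υ : ℕ → ℕ × ℕ → ZMod N × ZMod N → ℕ)
    (hΥ1 : ∀ l α k, 1 ≤ Υ l α k)
    (hΥ2 : ∀ l α k, (Υ l α k : ℝ) ≤ Real.logb 2 N)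
    (lam : ℕ → ℕ × ℕ → ZMod N × ZMod N → ℝ)
    (hlam : ∀ l α k, lam l α k = (2 : ℝ) ^ (β * (Υ l α k : ℝ)))
    (Cf : ℝ) (hCf : 1 ≤ Cf)
    (f : ZMod N × ZMod N → ℝ) (hfM : ∀ k, f k ∈ Set.Icc (0 : ℝ) M)
    (hf : wnormW r N L lam f ≤ Cf * Real.sqrt ((N : ℝ) ^ 2))
    (a : ℝ) (ha : 1 ≤ a)
    (t : ℝ) (ht : ((N : ℝ) ^ 2) ^ (-a) ≤ t) :
    Real.log (coverNum M t
        {u : ZMod N × ZMod N → ℝ | (∀ k, u k ∈ Set.Icc (0 : ℝ) M) ∧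
          wnormW r N L lam u ≤ wnormW r N L lam f}) ≤
      20 * M * (4 * a + max (1 - β) 1) * CW * Cf * (1 + CW * Cf) / t *
        ((N : ℝ) ^ 2) ^ (max (1 - β) 1 / 2) * Real.logb 2 ((N : ℝ) ^ 2) :=
  stmt2_general N hN r L M hM CW hCW1 hCW β Υ hΥ2 lam hlam Cf hCf f hf a ha t ht

end WFrame
end
end

section
/- For every integer r ≥ 1 there exists a constant C_W ≥ 1, depending only on r (in particular independent of N and of the number of decomposition levels L), such that for all integers N ≥ 2, L ≥ 1 and all u : Ω → ℝ one has ‖∇u‖₁ ≤ C_W·‖Wu‖₁. -/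
/-!
Write `P, Q ∈ ℝ[ℤ]` for the filters `p, q`. Each `a_α` is a unit multiple of `Q^α P^(r-α)`, and
`P + Q = 2` is a unit, so the binomial expansion of `(Q + P)^r` (resp. of `Q (Q + P)^r`) shows that
`1` lies in the ideal generated by `a_0, …, a_r` and `Q` in the ideal generated by `a_1, …, a_r`.
Taking tensor products, both difference filters `δ₀ - δ_{e_j}` lie in the ideal of `ℝ[ℤ²]`
generated by the band filters `a_α`, `α ∈ B`. By Young's inequality the filters `d` with
`‖d[-·] ⊛ u‖₁ ≤ C ∑_α ‖W_{0,α} u‖₁` (with `C` independent of `N`) form an ideal; it contains the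
band filters, hence both differences, and these bound the total variation. Only the first
decomposition level is used, which is why the constant does not depend on `L`.
-/

noncomputable section

open scoped BigOperators

namespace WFrame

open AddMonoidAlgebra

section BinomialSpan

variable {R : Type*} [CommSemiring R] {p q : R}

lemma one_mem_span_pow_mul_pow (h : IsUnit (q + p)) (r : ℕ) :
    1 ∈ Ideal.span ((fun k => q ^ k * p ^ (r - k)) '' Set.Iic r) := by
  have hmem : (q + p) ^ r ∈ Ideal.span ((fun k => q ^ k * p ^ (r - k)) '' Set.Iic r) := by
    rw [add_pow]
    refine Ideal.sum_mem _ fun k hk => Ideal.mul_mem_right _ _ (Ideal.subset_span ⟨k, ?_, rfl⟩)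
    simpa [Nat.lt_succ_iff] using hk
  rw [← Ideal.eq_top_iff_one]
  exact Ideal.eq_top_of_isUnit_mem _ hmem (h.pow r)

/-- Multiplying the binomial expansion of `(q + p) ^ r` by `q` puts a factor `q` into every
term; only the term `q * p ^ r = p * (q * p ^ (r - 1))` needs `1 ≤ r`. -/
lemma mem_span_pow_mul_pow (h : IsUnit (q + p)) {r : ℕ} (hr : 1 ≤ r) :
    q ∈ Ideal.span ((fun k => q ^ k * p ^ (r - k)) '' Set.Icc 1 r) := by
  set I := Ideal.span ((fun k => q ^ k * p ^ (r - k)) '' Set.Icc 1 r)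
  have hgen : ∀ k, 1 ≤ k → k ≤ r → q ^ k * p ^ (r - k) ∈ I :=
    fun k hk₁ hk₂ => Ideal.subset_span ⟨k, ⟨hk₁, hk₂⟩, rfl⟩
  rw [← Ideal.unit_mul_mem_iff_mem _ (h.pow r), add_pow, Finset.sum_mul]
  refine Ideal.sum_mem _ fun k hk => ?_
  rw [Finset.mem_range, Nat.lt_succ_iff] at hk
  rcases Nat.eq_zero_or_pos k with rfl | hk0
  · have hp : p ^ r = p * p ^ (r - 1) := by rw [← pow_succ', Nat.sub_add_cancel hr]
    convert I.mul_mem_left (p * (r.choose 0 : R)) (hgen 1 le_rfl hr) using 1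
    rw [pow_zero, one_mul, Nat.sub_zero, hp]
    ring
  · convert I.mul_mem_left (q * (r.choose k : R)) (hgen k hk0 hk) using 1
    ring

lemma span_image_le_of_dvd {ι : Type*} {f g : ι → R} {s : Set ι} (h : ∀ i ∈ s, f i ∣ g i) :
    Ideal.span (g '' s) ≤ Ideal.span (f '' s) :=
  Ideal.span_le.mpr <| by
    rintro _ ⟨i, hi, rfl⟩
    exact Ideal.mem_of_dvd _ (h i hi) (Ideal.subset_span ⟨i, hi, rfl⟩)

end BinomialSpan

lemma ofCoeff_fconv {G : Type*} [AddMonoid G] (f g : G →₀ ℝ) :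
    ofCoeff (fconv f g) = ofCoeff f * ofCoeff g := by
  simp only [fconv, mul_def, ofCoeff_finsuppSum, ofCoeff_single]

lemma ofCoeff_fpow {G : Type*} [AddMonoid G] (f : G →₀ ℝ) (n : ℕ) :
    ofCoeff (fpow f n) = ofCoeff f ^ n := by
  induction n with
  | zero => exact one_def.symm
  | succ n ih => rw [fpow, ofCoeff_fconv, ih, pow_succ]

lemma ofCoeff_mapDomain_add_right {G : Type*} [AddCommMonoid G] (j : G) (x : G →₀ ℝ) :
    ofCoeff (Finsupp.mapDomain (· + j) x) = single j 1 * ofCoeff x := by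
  induction x using Finsupp.induction_linear with
  | zero => simp
  | add x y hx hy => rw [Finsupp.mapDomain_add, ofCoeff_add, ofCoeff_add, hx, hy, mul_add]
  | single a c => rw [Finsupp.mapDomain_single, ofCoeff_single, ofCoeff_single,
      single_mul_single, add_comm, one_mul]

lemma smul_single_mul_dvd {G : Type*} [AddCommGroup G] {c : ℝ} (hc : c ≠ 0) (j : G)
    (x : ℝ[G]) : c • (single j 1 * x) ∣ x := by
  have hunit : IsUnit (single j c : ℝ[G]) :=
    IsUnit.of_mul_eq_one (single (-j) c⁻¹) (by rw [single_mul_single, add_neg_cancel,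
      mul_inv_cancel₀ hc, one_def])
  rw [← smul_mul_assoc, smul_single, smul_eq_mul, mul_one]
  exact hunit.mul_left_dvd.mpr dvd_rfl

lemma aF_dvd (r α : ℕ) (hα : α ≤ r) :
    ofCoeff (aF r α) ∣ ofCoeff qF ^ α * ofCoeff pF ^ (r - α) := by
  unfold aF
  split_ifs with h0
  · subst h0
    rw [ofCoeff_smul, ofCoeff_mapDomain_add_right, ofCoeff_fpow, pow_zero, one_mul, Nat.sub_zero]
    exact smul_single_mul_dvd (by positivity) _ _
  · rw [ofCoeff_smul, ofCoeff_mapDomain_add_right, ofCoeff_fconv, ofCoeff_fpow, ofCoeff_fpow,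
      mul_comm (ofCoeff pF ^ _)]
    have : (0 : ℝ) < r.choose α := by exact_mod_cast Nat.choose_pos hα
    exact smul_single_mul_dvd (by positivity) _ _

lemma isUnit_ofCoeff_qF_add_pF : IsUnit (ofCoeff qF + ofCoeff pF : ℝ[ℤ]) := by
  have : qF + pF = Finsupp.single 0 2 := by
    rw [qF, pF, sub_add_add_cancel, ← Finsupp.single_add]
    norm_num
  rw [← ofCoeff_add, this, ofCoeff_single]
  exact (isUnit_iff_ne_zero.mpr two_ne_zero).map (algebraMap ℝ ℝ[ℤ])

lemma one_mem_span_aF (r : ℕ) :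
    (1 : ℝ[ℤ]) ∈ Ideal.span ((fun k => ofCoeff (aF r k)) '' Set.Iic r) :=
  span_image_le_of_dvd (fun k hk => aF_dvd r k hk)
    (one_mem_span_pow_mul_pow isUnit_ofCoeff_qF_add_pF r)

lemma ofCoeff_qF_mem_span_aF {r : ℕ} (hr : 1 ≤ r) :
    ofCoeff qF ∈ Ideal.span ((fun k => ofCoeff (aF r k)) '' Set.Icc 1 r) :=
  span_image_le_of_dvd (fun k hk => aF_dvd r k hk.2)
    (mem_span_pow_mul_pow isUnit_ofCoeff_qF_add_pF hr)

abbrev embFst : ℝ[ℤ] →+* ℝ[ℤ × ℤ] := mapDomainRingHom ℝ (AddMonoidHom.inl ℤ ℤ)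

abbrev embSnd : ℝ[ℤ] →+* ℝ[ℤ × ℤ] := mapDomainRingHom ℝ (AddMonoidHom.inr ℤ ℤ)

lemma ofCoeff_tens2 (f g : ℤ →₀ ℝ) :
    ofCoeff (tens2 f g) = embFst (ofCoeff f) * embSnd (ofCoeff g) := by
  induction f using Finsupp.induction_linear with
  | zero => ext; simp [tens2]
  | add f f' hf hf' =>
    rw [ofCoeff_add, map_add, add_mul, ← hf, ← hf', ← ofCoeff_add]
    congr 1; ext; simp [tens2, add_mul]
  | single a c =>
    induction g using Finsupp.induction_linear with
    | zero => ext; simp [tens2]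
    | add g g' hg hg' =>
      rw [ofCoeff_add, map_add, mul_add, ← hg, ← hg', ← ofCoeff_add]
      congr 1; ext; simp [tens2, mul_add]
    | single b d =>
      simp only [ofCoeff_single, mapDomainRingHom_apply, mapDomain_single, single_mul_single,
        AddMonoidHom.inl_apply, AddMonoidHom.inr_apply, Prod.mk_add_mk, add_zero, zero_add]
      rw [← ofCoeff_single]
      congr 1; ext ⟨k₁, k₂⟩
      simp only [tens2, Finsupp.onFinset_apply, Finsupp.single_apply, Prod.mk.injEq]
      split_ifs <;> simp_all

def bandIdeal (r : ℕ) : Ideal ℝ[ℤ × ℤ] :=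
  Ideal.span ((fun α => ofCoeff (a2 r α)) '' ↑(Band r))

lemma embFst_mul_embSnd_mem_bandIdeal {r : ℕ} {s t : Set ℕ} (hst : s ×ˢ t ⊆ ↑(Band r))
    {x y : ℝ[ℤ]} (hx : x ∈ Ideal.span ((fun k => ofCoeff (aF r k)) '' s))
    (hy : y ∈ Ideal.span ((fun k => ofCoeff (aF r k)) '' t)) :
    embFst x * embSnd y ∈ bandIdeal r := by
  have hxy := Ideal.mul_mem_mul (Ideal.mem_map_of_mem embFst hx) (Ideal.mem_map_of_mem embSnd hy)
  rw [Ideal.map_span, Ideal.map_span, Ideal.span_mul_span'] at hxy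
  refine Ideal.span_mono ?_ hxy
  rintro _ ⟨_, ⟨_, ⟨k, hk, rfl⟩, rfl⟩, _, ⟨_, ⟨l, hl, rfl⟩, rfl⟩, rfl⟩
  exact ⟨(k, l), hst ⟨hk, hl⟩, ofCoeff_tens2 _ _⟩

lemma embFst_qF_mem_bandIdeal {r : ℕ} (hr : 1 ≤ r) : embFst (ofCoeff qF) ∈ bandIdeal r := by
  simpa using embFst_mul_embSnd_mem_bandIdeal (s := Set.Icc 1 r) (t := Set.Iic r)
    (by rintro ⟨a, b⟩; simp [Band]; omega) (ofCoeff_qF_mem_span_aF hr) (one_mem_span_aF r)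

lemma embSnd_qF_mem_bandIdeal {r : ℕ} (hr : 1 ≤ r) : embSnd (ofCoeff qF) ∈ bandIdeal r := by
  simpa using embFst_mul_embSnd_mem_bandIdeal (s := Set.Iic r) (t := Set.Icc 1 r)
    (by rintro ⟨a, b⟩; simp [Band]; omega) (one_mem_span_aF r) (ofCoeff_qF_mem_span_aF hr)

def l1 {T : Type*} [Fintype T] (u : T → ℝ) : ℝ := ∑ k, |u k|

section L1

variable {T : Type*} [Fintype T]

lemma l1_nonneg (u : T → ℝ) : 0 ≤ l1 u :=
  Finset.sum_nonneg fun _ _ => abs_nonneg _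

lemma l1_add_le (u v : T → ℝ) : l1 (u + v) ≤ l1 u + l1 v := by
  rw [l1, l1, l1, ← Finset.sum_add_distrib]
  exact Finset.sum_le_sum fun k _ => abs_add_le _ _

lemma l1_mapDomain_le {G : Type*} (f : G → T) (a : G →₀ ℝ) :
    l1 ⇑(Finsupp.mapDomain f a) ≤ a.sum fun _ c => |c| := by
  classical
  calc l1 ⇑(Finsupp.mapDomain f a)
      = ∑ k, |∑ m ∈ a.support, Finsupp.single (f m) (a m) k| := by
        simp only [l1, Finsupp.mapDomain, Finsupp.sum, Finsupp.finsetSum_apply]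
    _ ≤ ∑ k, ∑ m ∈ a.support, |Finsupp.single (f m) (a m) k| :=
        Finset.sum_le_sum fun _ _ => Finset.abs_sum_le_sum_abs _ _
    _ = ∑ m ∈ a.support, |a m| := by
        rw [Finset.sum_comm]
        refine Finset.sum_congr rfl fun m _ => ?_
        simp [Finsupp.single_apply, apply_ite]

lemma l1_coeff_mul_le [AddCommGroup T] (A B : ℝ[T]) :
    l1 ⇑(A * B).coeff ≤ l1 ⇑A.coeff * l1 ⇑B.coeff := by
  calc l1 ⇑(A * B).coeff = ∑ k, |∑ h, A.coeff h * B.coeff (-h + k)| := by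
        refine Finset.sum_congr rfl fun k _ => ?_
        rw [coeff_mul_apply_left, Finsupp.sum_fintype _ _ (by simp)]
    _ ≤ ∑ k, ∑ h, |A.coeff h| * |B.coeff (-h + k)| := by
        gcongr with k
        exact (Finset.abs_sum_le_sum_abs _ _).trans_eq (by simp only [abs_mul])
    _ = ∑ h, |A.coeff h| * ∑ k, |B.coeff (-h + k)| := by
        rw [Finset.sum_comm]
        simp only [Finset.mul_sum]
    _ = l1 ⇑A.coeff * l1 ⇑B.coeff := by
        rw [l1, Finset.sum_mul]
        exact Finset.sum_congr rfl fun h _ =>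
          congrArg _ (Equiv.sum_comp (Equiv.addLeft (-h)) fun k => |B.coeff k|)

end L1

def castT (N : ℕ) : ℤ × ℤ →+ ZMod N × ZMod N :=
  (Int.castAddHom (ZMod N)).prodMap (Int.castAddHom (ZMod N))

/-- `corrHom N a` is the periodization `P_N(a[−·])` of the reflected filter. -/
def corrHom (N : ℕ) : ℝ[ℤ × ℤ] →+* ℝ[ZMod N × ZMod N] := mapDomainRingHom ℝ (-castT N)

lemma per_refl2 {N : ℕ} (a : ℝ[ℤ × ℤ]) : per N (refl2 a.coeff) = ⇑(corrHom N a).coeff := by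
  classical
  have hcomp : ⇑(-castT N) = castT N ∘ Neg.neg := funext fun m => (map_neg (castT N) m).symm
  funext k
  rw [corrHom, mapDomainRingHom_apply, mapDomain, coeff_ofCoeff, hcomp, Finsupp.mapDomain_comp,
    Finsupp.mapDomain, Finsupp.sum_apply, refl2, Finsupp.sum, per]
  simp only [Finsupp.single_apply, castT]
  rfl

section Periodic

variable {N : ℕ} [NeZero N]

lemma pconv_refl2 (a : ℝ[ℤ × ℤ]) (u : ZMod N × ZMod N → ℝ) :
    pconv N (refl2 a.coeff) u =
      ⇑(corrHom N a * ofCoeff (Finsupp.equivFunOnFinite.symm u)).coeff := by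
  funext k
  rw [pconv, per_refl2, coeff_mul_apply_left, Finsupp.sum_fintype _ _ (by simp)]
  refine Fintype.sum_equiv (Equiv.subLeft k) _ _ fun n => ?_
  simp

lemma pconv_refl2_add (d e : ℝ[ℤ × ℤ]) (u : ZMod N × ZMod N → ℝ) :
    pconv N (refl2 (d + e).coeff) u = pconv N (refl2 d.coeff) u + pconv N (refl2 e.coeff) u := by
  rw [pconv_refl2, pconv_refl2, pconv_refl2, map_add, add_mul, coeff_add, Finsupp.coe_add]

lemma pconv_refl2_mul (h d : ℝ[ℤ × ℤ]) (u : ZMod N × ZMod N → ℝ) :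
    pconv N (refl2 (h * d).coeff) u = pconv N (refl2 h.coeff) (pconv N (refl2 d.coeff) u) := by
  rw [pconv_refl2, pconv_refl2, pconv_refl2 d, Finsupp.equivFunOnFinite_symm_coe, map_mul,
    mul_assoc]

lemma l1_pconv_refl2_mul_le (h d : ℝ[ℤ × ℤ]) (u : ZMod N × ZMod N → ℝ) :
    l1 (pconv N (refl2 (h * d).coeff) u) ≤
      (h.coeff.sum fun _ c => |c|) * l1 (pconv N (refl2 d.coeff) u) := by
  rw [pconv_refl2_mul, pconv_refl2 h]
  refine (l1_coeff_mul_le _ _).trans ?_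
  rw [coeff_ofCoeff, Finsupp.coe_equivFunOnFinite_symm]
  exact mul_le_mul_of_nonneg_right (l1_mapDomain_le _ _) (l1_nonneg _)

lemma pconv_refl2_one_sub_single (e : ℤ × ℤ) (u : ZMod N × ZMod N → ℝ) (k : ZMod N × ZMod N) :
    pconv N (refl2 (1 - single e 1 : ℝ[ℤ × ℤ]).coeff) u k = u k - u (k + castT N e) := by
  rw [pconv_refl2, map_sub, map_one, sub_mul, one_mul, coeff_sub, Finsupp.sub_apply, corrHom,
    mapDomainRingHom_apply, mapDomain_single, coeff_single_mul_apply]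
  simp [add_comm]

end Periodic

lemma embFst_ofCoeff_qF : embFst (ofCoeff qF) = 1 - single (1, 0) 1 := by
  rw [qF, ofCoeff_sub, ofCoeff_single, ofCoeff_single, map_sub, mapDomainRingHom_apply,
    mapDomainRingHom_apply, mapDomain_single, mapDomain_single]
  rfl

lemma embSnd_ofCoeff_qF : embSnd (ofCoeff qF) = 1 - single (0, 1) 1 := by
  rw [qF, ofCoeff_sub, ofCoeff_single, ofCoeff_single, map_sub, mapDomainRingHom_apply,
    mapDomainRingHom_apply, mapDomain_single, mapDomain_single]
  rfl

section Grid

variable {N : ℕ} [NeZero N]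

lemma sum_range_sum_range_le_sum {a b : ℕ} (ha : a ≤ N) (hb : b ≤ N)
    {f : ZMod N × ZMod N → ℝ} (hf : 0 ≤ f) :
    ∑ i ∈ Finset.range a, ∑ j ∈ Finset.range b, f (i, j) ≤ ∑ k, f k := by
  classical
  have hinj : Set.InjOn (fun p : ℕ × ℕ => ((p.1 : ZMod N), (p.2 : ZMod N)))
      ↑(Finset.range a ×ˢ Finset.range b) := by
    rintro ⟨i, j⟩ hij ⟨i', j'⟩ hij' h
    simp only [Finset.coe_product, Set.mem_prod, Finset.coe_range, Set.mem_Iio] at hij hij'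
    simp only [Prod.mk.injEq, ZMod.natCast_eq_natCast_iff'] at h ⊢
    rwa [Nat.mod_eq_of_lt (by omega), Nat.mod_eq_of_lt (by omega), Nat.mod_eq_of_lt (by omega),
      Nat.mod_eq_of_lt (by omega)] at h
  rw [← Finset.sum_product' (f := fun (i j : ℕ) => f (i, j)), ← Finset.sum_image hinj]
  exact Finset.sum_le_sum_of_subset_of_nonneg (Finset.subset_univ _) fun k _ _ => hf k

lemma tv_le_l1_pconv_diff (u : ZMod N × ZMod N → ℝ) :
    tv N u ≤ l1 (pconv N (refl2 (embFst (ofCoeff qF)).coeff) u) +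
      l1 (pconv N (refl2 (embSnd (ofCoeff qF)).coeff) u) := by
  rw [tv, embFst_ofCoeff_qF, embSnd_ofCoeff_qF]
  gcongr
  · refine le_of_eq_of_le ?_ (sum_range_sum_range_le_sum (N.sub_le 1) le_rfl fun k => abs_nonneg _)
    simp only [pconv_refl2_one_sub_single]
    simp [castT, abs_sub_comm]
  · refine le_of_eq_of_le ?_ (sum_range_sum_range_le_sum le_rfl (N.sub_le 1) fun k => abs_nonneg _)
    simp only [pconv_refl2_one_sub_single]
    simp [castT, abs_sub_comm]

end Grid

lemma aLvl_zero (r : ℕ) (α : ℕ × ℕ) : aLvl r 0 α = a2 r α := by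
  have hup : upSample 0 (a2 r α) = a2 r α := by
    simp only [upSample, pow_zero, one_mul]
    exact Finsupp.mapDomain_id
  apply ofCoeff_injective
  rw [aLvl, hup, ofCoeff_fconv, lowChain, ofCoeff_single, ← one_def, mul_one]

lemma sum_l1_Wc_zero_le_wnorm1 {r N L : ℕ} [NeZero N] (hL : 1 ≤ L) (u : ZMod N × ZMod N → ℝ) :
    ∑ α ∈ Band r, l1 (Wc r N 0 α u) ≤ wnorm1 r N L u := by
  simp only [wnorm1, l1]
  rw [Finset.sum_comm]
  refine Finset.sum_le_sum fun k _ => ?_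
  exact Finset.single_le_sum (f := fun l => ∑ α ∈ Band r, |Wc r N l α u k|)
    (fun _ _ => Finset.sum_nonneg fun _ _ => abs_nonneg _) (Finset.mem_range.mpr hL)

def controlledIdeal (r : ℕ) : Ideal ℝ[ℤ × ℤ] where
  carrier := {d | ∃ C : ℝ, ∀ (N : ℕ) [NeZero N] (u : ZMod N × ZMod N → ℝ),
    l1 (pconv N (refl2 d.coeff) u) ≤ C * ∑ α ∈ Band r, l1 (Wc r N 0 α u)}
  zero_mem' := ⟨0, fun N _ u => by simp [l1, pconv, per, refl2]⟩
  add_mem' := by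
    rintro d e ⟨C, hC⟩ ⟨D, hD⟩
    refine ⟨C + D, fun N _ u => ?_⟩
    rw [pconv_refl2_add, add_mul]
    exact (l1_add_le _ _).trans (add_le_add (hC N u) (hD N u))
  smul_mem' := by
    rintro h d ⟨C, hC⟩
    refine ⟨(h.coeff.sum fun _ c => |c|) * C, fun N _ u => ?_⟩
    have hh : 0 ≤ h.coeff.sum fun _ c => |c| := Finset.sum_nonneg fun _ _ => abs_nonneg _
    rw [smul_eq_mul, mul_assoc]
    exact (l1_pconv_refl2_mul_le h d u).trans (mul_le_mul_of_nonneg_left (hC N u) hh)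

lemma bandIdeal_le_controlledIdeal (r : ℕ) : bandIdeal r ≤ controlledIdeal r := by
  refine Ideal.span_le.mpr ?_
  rintro _ ⟨α, hα, rfl⟩
  refine ⟨1, fun N _ u => ?_⟩
  rw [one_mul, coeff_ofCoeff, ← aLvl_zero]
  exact Finset.single_le_sum (f := fun β => l1 (Wc r N 0 β u)) (fun _ _ => l1_nonneg _) hα

/-- for every r ≥ 1 there is `C_W ≥ 1` depending only on `r` such that
`‖∇u‖₁ ≤ C_W·‖Wu‖₁` for all grid sizes `N ≥ 2`, levels `L ≥ 1` and all `u`. -/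
theorem stmt3 (r : ℕ) (hr : 1 ≤ r) :
    ∃ C : ℝ, 1 ≤ C ∧ ∀ (N : ℕ) (_hN : 2 ≤ N) (L : ℕ) (_hL : 1 ≤ L),
      haveI : NeZero N := ⟨by omega⟩
      ∀ u : ZMod N × ZMod N → ℝ, tv N u ≤ C * wnorm1 r N L u := by
  obtain ⟨C₁, hC₁⟩ := bandIdeal_le_controlledIdeal r (embFst_qF_mem_bandIdeal hr)
  obtain ⟨C₂, hC₂⟩ := bandIdeal_le_controlledIdeal r (embSnd_qF_mem_bandIdeal hr)
  refine ⟨max 1 (C₁ + C₂), le_max_left _ _, fun N hN L hL => ?_⟩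
  have : NeZero N := ⟨by omega⟩
  intro u
  have hW : 0 ≤ ∑ α ∈ Band r, l1 (Wc r N 0 α u) := Finset.sum_nonneg fun _ _ => l1_nonneg _
  calc tv N u
      ≤ l1 (pconv N (refl2 (embFst (ofCoeff qF)).coeff) u) +
          l1 (pconv N (refl2 (embSnd (ofCoeff qF)).coeff) u) := tv_le_l1_pconv_diff u
    _ ≤ (C₁ + C₂) * ∑ α ∈ Band r, l1 (Wc r N 0 α u) := by
        rw [add_mul]; exact add_le_add (hC₁ N u) (hC₂ N u)
    _ ≤ max 1 (C₁ + C₂) * ∑ α ∈ Band r, l1 (Wc r N 0 α u) :=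
        mul_le_mul_of_nonneg_right (le_max_right _ _) hW
    _ ≤ max 1 (C₁ + C₂) * wnorm1 r N L u :=
        mul_le_mul_of_nonneg_left (sum_l1_Wc_zero_le_wnorm1 hL u) (by positivity)

end WFrame
end
end

section
/- For every u : Ω → ℝ (Ω identified with (ℤ/Nℤ)², so that all index arithmetic below is modulo N), Σ_{k∈Ω} |u[k+e₁] − u[k]| + Σ_{k∈Ω} |u[k+e₂] − u[k]| ≤ 6·Σ_{α∈B} √(binom(r,α₁)·binom(r,α₂)) · Σ_{k∈Ω} |(a_α[−·] ⊛ u)[k]|, where e₁ = (1,0), e₂ = (0,1). In particular the discrete total variation ‖∇u‖₁ (which omits the wrap-around differences) is bounded by the right-hand side. -/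
noncomputable section

open scoped BigOperators

/-!
Put `p = (δ₀ + δ₁)/2` and `q = (δ₀ − δ₁)/2`, so that `p + q = 1`; up to a sign and the factor
`√C(r,γ)`, the filter `a_γ` is `p^(r-γ) q^γ` shifted by `j_r`. The binomial theorem gives
`q = q (p + q)^(r-1) = Σ_α C(r-1,α) p^(r-1-α) q^(α+1)` and `1 = Σ_β C(r,β) p^(r-β) q^β`. Tensoring
the two expansions writes the half difference `q ⊗ δ` as a combination of the band filters
`a_(α+1,β)` with coefficients `C(r-1,α) C(r,β) / √(C(r,α+1) C(r,β)) ≤ √(C(r,α+1) C(r,β))`. As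
`a ↦ Σ_k |(a[−·] ⊛ u)[k]|` is a seminorm, each directional difference sum is at most twice the
weighted band sum, and `2 + 2 ≤ 6`.
-/

namespace WFrame

open Finset

section AlgebraBridge

variable {G : Type*}

lemma fconv_coeff [AddMonoid G] (f g : AddMonoidAlgebra ℝ G) :
    fconv f.coeff g.coeff = (f * g).coeff := by
  rw [AddMonoidAlgebra.mul_def, AddMonoidAlgebra.coeff_finsuppSum]
  simp only [AddMonoidAlgebra.coeff_finsuppSum, AddMonoidAlgebra.coeff_single]
  rfl

lemma fpow_coeff [AddMonoid G] (f : AddMonoidAlgebra ℝ G) (n : ℕ) :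
    fpow f.coeff n = (f ^ n).coeff := by
  induction n with
  | zero => rfl
  | succ n ih => rw [pow_succ, ← fconv_coeff, ← ih]; rfl

lemma coeff_mul_single_one_eq_mapDomain [AddCommMonoid G] (f : AddMonoidAlgebra ℝ G) (t : G) :
    (f * AddMonoidAlgebra.single t 1).coeff = Finsupp.mapDomain (· + t) f.coeff := by
  rw [AddMonoidAlgebra.mul_def, AddMonoidAlgebra.coeff_finsuppSum, Finsupp.mapDomain]
  refine Finsupp.sum_congr fun a _ => ?_
  simp

end AlgebraBridge

theorem sum_choose_nsmul_pow_mul_pow_eq_one {R : Type*} [CommSemiring R] {p q : R}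
    (h : p + q = 1) (n : ℕ) :
    ∑ m ∈ range (n + 1), n.choose m • (p ^ (n - m) * q ^ m) = 1 := by
  conv_rhs => rw [← one_pow n, ← h, add_comm, add_pow]
  refine sum_congr rfl fun m _ => ?_
  rw [nsmul_eq_mul]
  ring

theorem eq_sum_choose_nsmul_pow_mul_pow_succ {R : Type*} [CommSemiring R] {p q : R}
    (h : p + q = 1) {n : ℕ} (hn : 1 ≤ n) :
    q = ∑ m ∈ range n, (n - 1).choose m • (p ^ (n - (m + 1)) * q ^ (m + 1)) := by
  obtain ⟨n, rfl⟩ : ∃ n', n = n' + 1 := ⟨n - 1, by omega⟩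
  conv_lhs => rw [← mul_one q, ← sum_choose_nsmul_pow_mul_pow_eq_one h n, mul_sum]
  refine sum_congr rfl fun m _ => ?_
  rw [mul_smul_comm, Nat.add_sub_cancel, show n + 1 - (m + 1) = n - m by omega]
  ring_nf

def halfP : AddMonoidAlgebra ℝ ℤ := (1 / 2 : ℝ) • AddMonoidAlgebra.ofCoeff pF

def halfQ : AddMonoidAlgebra ℝ ℤ := (1 / 2 : ℝ) • AddMonoidAlgebra.ofCoeff qF

lemma halfP_add_halfQ : halfP + halfQ = 1 := by
  rw [halfP, halfQ, ← smul_add, ← AddMonoidAlgebra.ofCoeff_add, pF, qF,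
    add_add_sub_cancel, ← Finsupp.single_add, AddMonoidAlgebra.ofCoeff_single,
    AddMonoidAlgebra.smul_single, AddMonoidAlgebra.one_def]
  norm_num

def uepFilter (r γ : ℕ) : AddMonoidAlgebra ℝ ℤ :=
  halfP ^ (r - γ) * halfQ ^ γ * AddMonoidAlgebra.single (jr r) 1

def uepSign (γ : ℕ) : ℝ := if γ = 0 then 1 else (-1) ^ (γ + 1)

lemma abs_uepSign (γ : ℕ) : |uepSign γ| = 1 := by
  unfold uepSign; split_ifs <;> simp

lemma coeff_uepFilter {r γ : ℕ} (hγ : γ ≤ r) :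
    (uepFilter r γ).coeff = (2 : ℝ) ^ (-(r : ℤ)) •
      Finsupp.mapDomain (· + jr r) (fconv (fpow pF (r - γ)) (fpow qF γ)) := by
  have hP : pF = ((2 : ℝ) • halfP).coeff := by simp [halfP, smul_smul]
  have hQ : qF = ((2 : ℝ) • halfQ).coeff := by simp [halfQ, smul_smul]
  rw [hP, hQ, fpow_coeff, fpow_coeff, fconv_coeff, ← coeff_mul_single_one_eq_mapDomain,
    smul_pow, smul_pow, smul_mul_smul_comm, ← pow_add, Nat.sub_add_cancel hγ, smul_mul_assoc,
    ← AddMonoidAlgebra.coeff_smul, smul_smul, zpow_neg, zpow_natCast,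
    inv_mul_cancel₀ (by positivity), one_smul, uepFilter]

lemma aF_eq_smul_coeff_uepFilter {r γ : ℕ} (hγ : γ ≤ r) :
    aF r γ = (uepSign γ * √(r.choose γ : ℝ)) • (uepFilter r γ).coeff := by
  rw [coeff_uepFilter hγ, smul_smul, aF, uepSign]
  split_ifs with h0
  · subst h0
    have hq0 : fpow qF 0 = (1 : AddMonoidAlgebra ℝ ℤ).coeff := rfl
    rw [hq0, ← AddMonoidAlgebra.coeff_ofCoeff (fpow pF r), fconv_coeff, mul_one]
    simp
  · ring_nf

lemma single_jr_eq_sum_uepFilter (r : ℕ) :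
    AddMonoidAlgebra.single (jr r) 1 = ∑ β ∈ range (r + 1), r.choose β • uepFilter r β := by
  conv_lhs => rw [← one_mul (AddMonoidAlgebra.single (jr r) 1),
    ← sum_choose_nsmul_pow_mul_pow_eq_one halfP_add_halfQ r, sum_mul]
  simp only [smul_mul_assoc, uepFilter]

lemma halfQ_mul_single_jr_eq_sum_uepFilter {r : ℕ} (hr : 1 ≤ r) :
    halfQ * AddMonoidAlgebra.single (jr r) 1 =
      ∑ α ∈ range r, (r - 1).choose α • uepFilter r (α + 1) := by
  conv_lhs => rw [eq_sum_choose_nsmul_pow_mul_pow_succ halfP_add_halfQ hr, sum_mul]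
  simp only [smul_mul_assoc, uepFilter]

lemma tens2_apply (f g : ℤ →₀ ℝ) (k : ℤ × ℤ) : tens2 f g k = f k.1 * g k.2 := rfl

lemma tens2_smul_smul (a b : ℝ) (f g : ℤ →₀ ℝ) :
    tens2 (a • f) (b • g) = (a * b) • tens2 f g := by
  ext k
  simp only [tens2_apply, Finsupp.smul_apply, smul_eq_mul]
  ring

lemma tens2_sum_nsmul_sum {ι κ : Type*} (s : Finset ι) (t : Finset κ) (c : ι → ℕ)
    (d : κ → ℕ) (f : ι → ℤ →₀ ℝ) (g : κ → ℤ →₀ ℝ) :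
    tens2 (∑ i ∈ s, c i • f i) (∑ j ∈ t, d j • g j) =
      ∑ i ∈ s, ∑ j ∈ t, (c i * d j) • tens2 (f i) (g j) := by
  ext k
  simp only [tens2_apply, Finsupp.finsetSum_apply, Finsupp.smul_apply, sum_mul_sum]
  refine sum_congr rfl fun i _ => sum_congr rfl fun j _ => ?_
  simp only [nsmul_eq_mul, Nat.cast_mul]
  ring

lemma tens2_single_right (f : ℤ →₀ ℝ) (b : ℤ) :
    tens2 f (Finsupp.single b 1) = Finsupp.mapDomain (·, b) f := by
  ext ⟨x, y⟩
  rw [tens2_apply, Finsupp.single_apply]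
  split_ifs with h
  · subst h
    rw [mul_one, Finsupp.mapDomain_apply (fun _ _ h => (Prod.ext_iff.1 h).1)]
  · rw [mul_zero, Finsupp.mapDomain_of_notMem_range]
    rintro ⟨_, h'⟩
    exact h (Prod.ext_iff.1 h').2

lemma tens2_single_left (a : ℤ) (g : ℤ →₀ ℝ) :
    tens2 (Finsupp.single a 1) g = Finsupp.mapDomain (a, ·) g := by
  ext ⟨x, y⟩
  rw [tens2_apply, Finsupp.single_apply]
  split_ifs with h
  · subst h
    rw [one_mul, Finsupp.mapDomain_apply (fun _ _ h => (Prod.ext_iff.1 h).2)]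
  · rw [zero_mul, Finsupp.mapDomain_of_notMem_range]
    rintro ⟨_, h'⟩
    exact h (Prod.ext_iff.1 h').1

def uepFilter2 (r : ℕ) (γ : ℕ × ℕ) : (ℤ × ℤ) →₀ ℝ :=
  tens2 (uepFilter r γ.1).coeff (uepFilter r γ.2).coeff

lemma mem_Band {r : ℕ} {γ : ℕ × ℕ} : γ ∈ Band r ↔ γ ≠ (0, 0) ∧ γ.1 ≤ r ∧ γ.2 ≤ r := by
  simp [Band]

lemma a2_eq_smul_uepFilter2 {r : ℕ} {γ : ℕ × ℕ} (hγ : γ ∈ Band r) :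
    a2 r γ = (uepSign γ.1 * uepSign γ.2 * √((r.choose γ.1 : ℝ) * r.choose γ.2)) •
      uepFilter2 r γ := by
  obtain ⟨-, h1, h2⟩ := mem_Band.1 hγ
  rw [a2, aF_eq_smul_coeff_uepFilter h1, aF_eq_smul_coeff_uepFilter h2, tens2_smul_smul,
    Real.sqrt_mul (Nat.cast_nonneg _), uepFilter2]
  ring_nf

lemma tens2_halfQ_single_eq_sum {r : ℕ} (hr : 1 ≤ r) :
    tens2 (halfQ * AddMonoidAlgebra.single (jr r) 1).coeff (Finsupp.single (jr r) 1) =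
      ∑ x ∈ range r ×ˢ range (r + 1),
        ((r - 1).choose x.1 * r.choose x.2) • uepFilter2 r (x.1 + 1, x.2) := by
  rw [← AddMonoidAlgebra.coeff_single, halfQ_mul_single_jr_eq_sum_uepFilter hr,
    single_jr_eq_sum_uepFilter, AddMonoidAlgebra.coeff_sum, AddMonoidAlgebra.coeff_sum]
  simp only [AddMonoidAlgebra.coeff_smul]
  rw [tens2_sum_nsmul_sum, sum_product]
  rfl

lemma tens2_single_halfQ_eq_sum {r : ℕ} (hr : 1 ≤ r) :
    tens2 (Finsupp.single (jr r) 1) (halfQ * AddMonoidAlgebra.single (jr r) 1).coeff =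
      ∑ x ∈ range r ×ˢ range (r + 1),
        ((r - 1).choose x.1 * r.choose x.2) • uepFilter2 r (x.2, x.1 + 1) := by
  rw [← AddMonoidAlgebra.coeff_single, halfQ_mul_single_jr_eq_sum_uepFilter hr,
    single_jr_eq_sum_uepFilter, AddMonoidAlgebra.coeff_sum, AddMonoidAlgebra.coeff_sum]
  simp only [AddMonoidAlgebra.coeff_smul]
  rw [tens2_sum_nsmul_sum, sum_product_right]
  refine sum_congr rfl fun α _ => sum_congr rfl fun β _ => ?_
  rw [mul_comm]
  rfl

lemma tens2_halfQ_single (j : ℤ) :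
    tens2 (halfQ * AddMonoidAlgebra.single j 1).coeff (Finsupp.single j 1) =
      Finsupp.single (j, j) (1 / 2) - Finsupp.single ((j, j) + (1, 0)) (1 / 2) := by
  rw [tens2_single_right, coeff_mul_single_one_eq_mapDomain, halfQ, AddMonoidAlgebra.coeff_smul,
    AddMonoidAlgebra.coeff_ofCoeff, qF]
  simp only [Finsupp.mapDomain_sub, Finsupp.mapDomain_single,
    smul_sub, Finsupp.smul_single, smul_eq_mul, mul_one, zero_add, Prod.mk_add_mk, add_zero]
  rw [add_comm 1 j]

lemma tens2_single_halfQ (j : ℤ) :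
    tens2 (Finsupp.single j 1) (halfQ * AddMonoidAlgebra.single j 1).coeff =
      Finsupp.single (j, j) (1 / 2) - Finsupp.single ((j, j) + (0, 1)) (1 / 2) := by
  rw [tens2_single_left, coeff_mul_single_one_eq_mapDomain, halfQ, AddMonoidAlgebra.coeff_smul,
    AddMonoidAlgebra.coeff_ofCoeff, qF]
  simp only [Finsupp.mapDomain_sub, Finsupp.mapDomain_single,
    smul_sub, Finsupp.smul_single, smul_eq_mul, mul_one, zero_add, Prod.mk_add_mk, add_zero]
  rw [add_comm 1 j]

section Correlation

variable (N : ℕ)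

def gridCast : ℤ × ℤ →+ ZMod N × ZMod N :=
  (Int.castAddHom (ZMod N)).prodMap (Int.castAddHom (ZMod N))

lemma per_eq_sum (a : (ℤ × ℤ) →₀ ℝ) (k : ZMod N × ZMod N) :
    per N a k = a.sum fun m c => if gridCast N m = k then c else 0 := rfl

variable [NeZero N] (u : ZMod N × ZMod N → ℝ)

lemma pconv_refl2_eq_linearCombination (a : (ℤ × ℤ) →₀ ℝ) :
    pconv N (refl2 a) u = Finsupp.linearCombination ℝ (fun m k => u (k + gridCast N m)) a := by
  funext k
  have hper (x : ZMod N × ZMod N) :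
      per N (refl2 a) x = a.sum fun m c => if gridCast N (-m) = x then c else 0 :=
    Finsupp.sum_mapDomain_index_inj (h := fun m c => if gridCast N m = x then c else 0)
      neg_injective
  simp only [pconv, hper, Finsupp.sum_mul]
  rw [Finsupp.linearCombination_apply, Finsupp.sum, Finset.sum_apply]
  unfold Finsupp.sum
  rw [Finset.sum_comm]
  refine sum_congr rfl fun m _ => ?_
  simp [ite_mul, eq_sub_iff_add_eq, ← eq_sub_iff_add_eq']

def coeffL1 (a : (ℤ × ℤ) →₀ ℝ) : ℝ := ∑ k, |pconv N (refl2 a) u k|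

lemma coeffL1_nonneg (a : (ℤ × ℤ) →₀ ℝ) : 0 ≤ coeffL1 N u a :=
  sum_nonneg fun _ _ => abs_nonneg _

lemma coeffL1_smul (c : ℝ) (a : (ℤ × ℤ) →₀ ℝ) :
    coeffL1 N u (c • a) = |c| * coeffL1 N u a := by
  simp only [coeffL1, pconv_refl2_eq_linearCombination, map_smul, Pi.smul_apply, smul_eq_mul,
    abs_mul, mul_sum]

lemma coeffL1_sum_nsmul_le {ι : Type*} (s : Finset ι) (c : ι → ℕ) (a : ι → (ℤ × ℤ) →₀ ℝ) :
    coeffL1 N u (∑ i ∈ s, c i • a i) ≤ ∑ i ∈ s, c i * coeffL1 N u (a i) := by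
  simp only [coeffL1, pconv_refl2_eq_linearCombination, map_sum, map_nsmul, mul_sum]
  rw [sum_comm]
  refine sum_le_sum fun k _ => ?_
  simp only [Finset.sum_apply, Pi.smul_apply]
  refine (abs_sum_le_sum_abs _ _).trans_eq (sum_congr rfl fun i _ => ?_)
  rw [nsmul_eq_mul, abs_mul, Nat.abs_cast]

lemma coeffL1_single_sub_single (t d : ℤ × ℤ) (c : ℝ) :
    coeffL1 N u (Finsupp.single t c - Finsupp.single (t + d) c) =
      |c| * ∑ k, |u (k + gridCast N d) - u k| := by
  rw [← Finsupp.smul_single_one, ← Finsupp.smul_single_one _ c, ← smul_sub, coeffL1_smul,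
    coeffL1]
  congr 1
  simp only [pconv_refl2_eq_linearCombination, map_sub, Finsupp.linearCombination_single,
    one_smul, Pi.sub_apply, map_add]
  rw [← Equiv.sum_comp (Equiv.addRight (gridCast N t)) (fun k => |u (k + gridCast N d) - u k|)]
  refine sum_congr rfl fun k _ => ?_
  rw [abs_sub_comm, Equiv.coe_addRight, add_assoc]

end Correlation

section BandBound

variable (N : ℕ) [NeZero N] (u : ZMod N × ZMod N → ℝ)

def bandWeightedL1 (r : ℕ) : ℝ :=
  ∑ γ ∈ Band r, √((r.choose γ.1 : ℝ) * r.choose γ.2) * coeffL1 N u (a2 r γ)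

lemma bandWeightedL1_nonneg (r : ℕ) : 0 ≤ bandWeightedL1 N u r :=
  sum_nonneg fun _ _ => mul_nonneg (Real.sqrt_nonneg _) (coeffL1_nonneg N u _)

variable {r : ℕ}

lemma coeffL1_a2 {γ : ℕ × ℕ} (hγ : γ ∈ Band r) :
    coeffL1 N u (a2 r γ) =
      √((r.choose γ.1 : ℝ) * r.choose γ.2) * coeffL1 N u (uepFilter2 r γ) := by
  rw [a2_eq_smul_uepFilter2 hγ, coeffL1_smul, abs_mul, abs_mul, abs_uepSign, abs_uepSign,
    one_mul, one_mul, abs_of_nonneg (Real.sqrt_nonneg _)]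

lemma coeffL1_le_bandWeightedL1 {ι : Type*} (S : Finset ι) (c : ι → ℕ) (b : ι → ℕ × ℕ)
    (hb : Set.InjOn b S) (hbS : ∀ i ∈ S, b i ∈ Band r)
    (hc : ∀ i ∈ S, c i ≤ r.choose (b i).1 * r.choose (b i).2) :
    coeffL1 N u (∑ i ∈ S, c i • uepFilter2 r (b i)) ≤ bandWeightedL1 N u r := by
  set w : ℕ × ℕ → ℝ := fun γ => √((r.choose γ.1 : ℝ) * r.choose γ.2)
  calc coeffL1 N u (∑ i ∈ S, c i • uepFilter2 r (b i))
      ≤ ∑ i ∈ S, c i * coeffL1 N u (uepFilter2 r (b i)) := coeffL1_sum_nsmul_le N u S c _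
    _ ≤ ∑ i ∈ S, w (b i) * coeffL1 N u (a2 r (b i)) := by
      refine sum_le_sum fun i hi => ?_
      have hci : (c i : ℝ) ≤ w (b i) * w (b i) := by
        rw [Real.mul_self_sqrt (by positivity)]
        exact_mod_cast hc i hi
      rw [coeffL1_a2 N u (hbS i hi), ← mul_assoc]
      exact mul_le_mul_of_nonneg_right hci (coeffL1_nonneg N u _)
    _ = ∑ γ ∈ S.image b, w γ * coeffL1 N u (a2 r γ) :=
      (sum_image (f := fun γ => w γ * coeffL1 N u (a2 r γ)) hb).symm
    _ ≤ ∑ γ ∈ Band r, w γ * coeffL1 N u (a2 r γ) :=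
      sum_le_sum_of_subset_of_nonneg (image_subset_iff.2 hbS) fun γ _ _ =>
        mul_nonneg (Real.sqrt_nonneg _) (coeffL1_nonneg N u _)

lemma choose_pred_le_choose_succ (hr : 1 ≤ r) (α : ℕ) : (r - 1).choose α ≤ r.choose (α + 1) := by
  obtain ⟨r, rfl⟩ : ∃ r', r = r' + 1 := ⟨r - 1, by omega⟩
  rw [Nat.add_sub_cancel, Nat.choose_succ_succ]
  exact Nat.le_add_right _ _

theorem sum_abs_sub_e1_le (hr : 1 ≤ r) :
    ∑ k, |u (k + ((1 : ZMod N), (0 : ZMod N))) - u k| ≤ 2 * bandWeightedL1 N u r := by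
  have hdiff := coeffL1_single_sub_single N u (jr r, jr r) (1, 0) (1 / 2)
  rw [← tens2_halfQ_single, tens2_halfQ_single_eq_sum hr] at hdiff
  have hband := coeffL1_le_bandWeightedL1 N u (r := r) (range r ×ˢ range (r + 1))
    (fun x => (r - 1).choose x.1 * r.choose x.2) (fun x => (x.1 + 1, x.2))
    (fun x _ y _ h => by simpa [Prod.ext_iff] using h)
    (fun x hx => by simp only [mem_product, mem_range] at hx; simp [mem_Band]; omega)
    (fun x _ => Nat.mul_le_mul_right _ (choose_pred_le_choose_succ hr x.1))
  have hcast : gridCast N (1, 0) = ((1 : ZMod N), (0 : ZMod N)) := by simp [gridCast]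
  rw [hcast] at hdiff
  norm_num at hdiff
  linarith

theorem sum_abs_sub_e2_le (hr : 1 ≤ r) :
    ∑ k, |u (k + ((0 : ZMod N), (1 : ZMod N))) - u k| ≤ 2 * bandWeightedL1 N u r := by
  have hdiff := coeffL1_single_sub_single N u (jr r, jr r) (0, 1) (1 / 2)
  rw [← tens2_single_halfQ, tens2_single_halfQ_eq_sum hr] at hdiff
  have hband := coeffL1_le_bandWeightedL1 N u (r := r) (range r ×ˢ range (r + 1))
    (fun x => (r - 1).choose x.1 * r.choose x.2) (fun x => (x.2, x.1 + 1))
    (fun x _ y _ h => by simp only [Prod.ext_iff] at h ⊢; omega)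
    (fun x hx => by simp only [mem_product, mem_range] at hx; simp [mem_Band]; omega)
    (fun x _ => by
      rw [mul_comm (r.choose _)]
      exact Nat.mul_le_mul_right _ (choose_pred_le_choose_succ hr x.1))
  have hcast : gridCast N (0, 1) = ((0 : ZMod N), (1 : ZMod N)) := by simp [gridCast]
  rw [hcast] at hdiff
  norm_num at hdiff
  linarith

end BandBound

theorem stmt4_general (N : ℕ) [NeZero N] (r : ℕ) (hr : 1 ≤ r)
    (u : ZMod N × ZMod N → ℝ) :
    (∑ k : ZMod N × ZMod N, |u (k + ((1 : ZMod N), (0 : ZMod N))) - u k|) +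
      (∑ k : ZMod N × ZMod N, |u (k + ((0 : ZMod N), (1 : ZMod N))) - u k|) ≤
    6 * ∑ α ∈ Band r, Real.sqrt ((r.choose α.1 : ℝ) * (r.choose α.2 : ℝ)) *
      ∑ k : ZMod N × ZMod N, |pconv N (refl2 (a2 r α)) u k| := by
  have h1 := sum_abs_sub_e1_le N u hr
  have h2 := sum_abs_sub_e2_le N u hr
  have hband := bandWeightedL1_nonneg N u r
  change _ ≤ 6 * bandWeightedL1 N u r
  linarith

/-- periodic total variation bound by single-level wavelet frame
coefficients: Σ_k |u[k+e₁]−u[k]| + Σ_k |u[k+e₂]−u[k]|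
  ≤ 6 Σ_{α∈B} √(C(r,α₁)C(r,α₂)) Σ_k |(a_α[−·] ⊛ u)[k]|  (indices mod N). -/
theorem stmt4 (N : ℕ) (hN : 2 ≤ N) [NeZero N] (r : ℕ) (hr : 1 ≤ r)
    (u : ZMod N × ZMod N → ℝ) :
    (∑ k : ZMod N × ZMod N, |u (k + ((1 : ZMod N), (0 : ZMod N))) - u k|) +
      (∑ k : ZMod N × ZMod N, |u (k + ((0 : ZMod N), (1 : ZMod N))) - u k|) ≤
    6 * ∑ α ∈ Band r, Real.sqrt ((r.choose α.1 : ℝ) * (r.choose α.2 : ℝ)) *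
      ∑ k : ZMod N × ZMod N, |pconv N (refl2 (a2 r α)) u k| :=
  stmt4_general N r hr u

end WFrame
end
end

section
/- Let (X, μ) be a probability space and let ξ : X → ℝ be a measurable, μ-integrable random variable with mean μ̄ := ∫ξ dμ ≥ 0. Assume there are constants B > 0 and c > 0 such that |ξ − μ̄| ≤ B μ-almost surely and ∫ξ² dμ ≤ c·∫ξ dμ. Then for every ε > 0, every γ with 0 < γ ≤ 1, and every integer m ≥ 1, the m-fold product measure μ^{⊗m} of the set { z = (z₁,…,z_m) ∈ X^m : (μ̄ − (1/m)·Σ_{i=1}^m ξ(z_i)) / √(μ̄ + ε) > γ·√ε } is at most exp(−3γ²mε/(6c + 2B)). -/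
/-!
The centred variable `η = μ̄ - ξ` has mean zero, `|η| ≤ B` and `E η² = Var ξ ≤ E ξ² ≤ c (μ̄ + ε)`.
On the event in question `∑ η(zᵢ) ≥ m t` with `t = γ √ε √(μ̄ + ε)`, so Bernstein's inequality
bounds its probability by `exp (-m t² / (2 (c (μ̄ + ε) + B t / 3)))`. Since `γ ≤ 1` gives
`t ≤ μ̄ + ε`, this exponent is at most `-3 γ² m ε / (6 c + 2 B)`.
-/

open MeasureTheory
open Real Finset ProbabilityTheory
open scoped Nat

namespace Real

theorem exp_sub_one_sub_eq_tsum (x : ℝ) :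
    exp x - 1 - x = ∑' n : ℕ, x ^ (n + 2) / ((n + 2)! : ℝ) := by
  simp only [exp_eq_exp_ℝ, NormedSpace.exp_eq_tsum_div]
  rw [← (summable_pow_div_factorial x).sum_add_tsum_nat_add 2]
  simp only [sum_range_succ, range_one, sum_singleton, pow_zero, pow_one, Nat.factorial_zero,
    Nat.factorial_one, Nat.cast_one, div_one]
  ring

/-- Comparing the exponential series termwise with a geometric series of ratio `b / 3`,
using `2 * 3 ^ n ≤ (n + 2)!`. -/
theorem exp_le_one_add_add_sq_div {x b : ℝ} (hx : |x| ≤ b) (hb : b < 3) :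
    exp x ≤ 1 + x + x ^ 2 / (2 * (1 - b / 3)) := by
  have hb0 : 0 ≤ b := (abs_nonneg x).trans hx
  have hb1 : b / 3 < 1 := by linarith
  have hterm (n : ℕ) : x ^ (n + 2) / ((n + 2)! : ℝ) ≤ x ^ 2 / 2 * (b / 3) ^ n := by
    have hfact : (2 * 3 ^ n : ℝ) ≤ (n + 2)! := by
      exact_mod_cast (Nat.factorial_mul_pow_le_factorial (m := 2) (n := n)).trans_eq
        (by rw [add_comm])
    have hpow : x ^ (n + 2) ≤ x ^ 2 * b ^ n :=
      calc x ^ (n + 2) ≤ |x| ^ (n + 2) := (le_abs_self _).trans (abs_pow x _).le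
        _ = x ^ 2 * |x| ^ n := by rw [pow_add, sq_abs, mul_comm]
        _ ≤ x ^ 2 * b ^ n := by gcongr
    calc x ^ (n + 2) / ((n + 2)! : ℝ) ≤ x ^ 2 * b ^ n / (n + 2)! := by gcongr
      _ ≤ x ^ 2 * b ^ n / (2 * 3 ^ n) := by gcongr
      _ = x ^ 2 / 2 * (b / 3) ^ n := by rw [div_pow]; ring
  have hsummable : Summable fun n : ℕ => x ^ (n + 2) / ((n + 2)! : ℝ) :=
    (summable_nat_add_iff 2).2 (summable_pow_div_factorial x)
  have hgeom : Summable fun n : ℕ => (b / 3) ^ n := summable_geometric_of_lt_one (by positivity) hb1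
  calc exp x = 1 + x + ∑' n : ℕ, x ^ (n + 2) / ((n + 2)! : ℝ) := by
        rw [← exp_sub_one_sub_eq_tsum]; ring
    _ ≤ 1 + x + ∑' n : ℕ, x ^ 2 / 2 * (b / 3) ^ n :=
        add_le_add_right (hsummable.tsum_le_tsum hterm (hgeom.mul_left _)) _
    _ = 1 + x + x ^ 2 / (2 * (1 - b / 3)) := by
        rw [tsum_mul_left, tsum_geometric_of_lt_one (by positivity) hb1]
        field_simp

end Real

namespace ProbabilityTheory

variable {Ω : Type*} [MeasurableSpace Ω] {μ : Measure Ω} [IsProbabilityMeasure μ]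

theorem mgf_le_exp_of_abs_le {X : Ω → ℝ} {B v t : ℝ} (hX : AEMeasurable X μ) (hX0 : μ[X] = 0)
    (hXB : ∀ᵐ ω ∂μ, |X ω| ≤ B) (hXv : ∫ ω, X ω ^ 2 ∂μ ≤ v) (ht : 0 ≤ t) (htB : t * B < 3) :
    mgf X μ t ≤ exp (v * (t ^ 2 / (2 * (1 - t * B / 3)))) := by
  set g := t ^ 2 / (2 * (1 - t * B / 3))
  have hg : 0 ≤ g := div_nonneg (sq_nonneg t) (by linarith)
  have hXint : Integrable X μ := .of_bound hX.aestronglyMeasurable B (by simpa using hXB)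
  have hX2int : Integrable (fun ω => X ω ^ 2) μ :=
    .of_bound (hX.pow_const 2).aestronglyMeasurable (B ^ 2) <| hXB.mono fun ω hω => by
      simpa using pow_le_pow_left₀ (abs_nonneg _) hω 2
  have hquad : ∀ᵐ ω ∂μ, exp (t * X ω) ≤ 1 + t * X ω + g * X ω ^ 2 := hXB.mono fun ω hω => by
    have := exp_le_one_add_add_sq_div (x := t * X ω) (b := t * B)
      (by rw [abs_mul, abs_of_nonneg ht]; exact mul_le_mul_of_nonneg_left hω ht) htB
    convert this using 1
    ring
  have hlin : Integrable (fun ω => 1 + t * X ω) μ := (integrable_const 1).add (hXint.const_mul t)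
  calc mgf X μ t ≤ ∫ ω, (1 + t * X ω + g * X ω ^ 2) ∂μ :=
        integral_mono_of_nonneg (.of_forall fun _ => (exp_pos _).le)
          (hlin.add (hX2int.const_mul g)) hquad
    _ = 1 + g * ∫ ω, X ω ^ 2 ∂μ := by
        rw [integral_add hlin (hX2int.const_mul g),
          integral_add (integrable_const 1) (hXint.const_mul t), integral_const_mul,
          integral_const_mul, hX0]
        simp
    _ ≤ 1 + v * g := by nlinarith
    _ ≤ exp (v * g) := by linarith [add_one_le_exp (v * g)]

/-- Bernstein's inequality, obtained from the Chernoff bound at `λ = t / (v + B * t / 3)`. -/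
theorem measureReal_sum_ge_le_of_iIndepFun_of_abs_le {ι : Type*} {X : ι → Ω → ℝ}
    (h_indep : iIndepFun X μ) (h_meas : ∀ i, Measurable (X i)) {s : Finset ι} {B v t : ℝ}
    (hX0 : ∀ i ∈ s, μ[X i] = 0) (hXB : ∀ i ∈ s, ∀ᵐ ω ∂μ, |X i ω| ≤ B)
    (hXv : ∀ i ∈ s, ∫ ω, X i ω ^ 2 ∂μ ≤ v) (hB : 0 ≤ B) (hv : 0 < v) (ht : 0 ≤ t) :
    μ.real {ω | #s * t ≤ ∑ i ∈ s, X i ω} ≤ exp (-(#s * t ^ 2) / (2 * (v + B * t / 3))) := by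
  set D := v + B * t / 3
  have hD : 0 < D := by positivity
  set l := t / D
  have hl : 0 ≤ l := by positivity
  have hlB : l * B < 3 := by
    rw [div_mul_eq_mul_div, div_lt_iff₀ hD]; linarith [show D = v + B * t / 3 from rfl]
  have hexp_int : ∀ i ∈ s, Integrable (fun ω => exp (l * X i ω)) μ := fun i hi =>
    .of_bound (by fun_prop) (exp (l * B)) <| (hXB i hi).mono fun ω hω => by
      rw [norm_of_nonneg (exp_pos _).le, exp_le_exp]
      exact mul_le_mul_of_nonneg_left ((le_abs_self _).trans hω) hl
  have hmgf : mgf (∑ i ∈ s, X i) μ l ≤ exp (v * (l ^ 2 / (2 * (1 - l * B / 3)))) ^ #s := by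
    rw [h_indep.mgf_sum h_meas, ← prod_const]
    exact prod_le_prod (fun _ _ => mgf_nonneg) fun i hi =>
      mgf_le_exp_of_abs_le (h_meas i).aemeasurable (hX0 i hi) (hXB i hi) (hXv i hi) hl hlB
  have hexponent : -l * (#s * t) + #s * (v * (l ^ 2 / (2 * (1 - l * B / 3)))) =
      -(#s * t ^ 2) / (2 * D) := by
    have : 1 - l * B / 3 = v / D := by simp only [l, D]; field_simp; ring
    rw [this]
    simp only [l]
    field_simp
    ring
  have hexp_sum_int := h_indep.integrable_exp_mul_sum h_meas hexp_int
  calc μ.real {ω | #s * t ≤ ∑ i ∈ s, X i ω}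
      ≤ exp (-l * (#s * t)) * mgf (∑ i ∈ s, X i) μ l := by
        simpa only [Finset.sum_apply] using measure_ge_le_exp_mul_mgf (#s * t) hl hexp_sum_int
    _ ≤ exp (-l * (#s * t)) * exp (v * (l ^ 2 / (2 * (1 - l * B / 3)))) ^ #s := by gcongr
    _ = exp (-(#s * t ^ 2) / (2 * D)) := by rw [← exp_nat_mul, ← exp_add, hexponent]

theorem measureReal_pi_sum_ge_le_of_abs_le {ι : Type*} [Fintype ι] {η : Ω → ℝ} {B v t : ℝ}
    (hη : Measurable η) (hη0 : μ[η] = 0) (hηB : ∀ᵐ ω ∂μ, |η ω| ≤ B)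
    (hηv : ∫ ω, η ω ^ 2 ∂μ ≤ v) (hB : 0 ≤ B) (hv : 0 < v) (ht : 0 ≤ t) :
    (Measure.pi fun _ : ι => μ).real {z | Fintype.card ι * t ≤ ∑ i, η (z i)} ≤
      exp (-(Fintype.card ι * t ^ 2) / (2 * (v + B * t / 3))) := by
  have h_indep : iIndepFun (fun i (z : ι → Ω) => η (z i)) (Measure.pi fun _ => μ) :=
    iIndepFun_pi fun _ => hη.aemeasurable
  have := measureReal_sum_ge_le_of_iIndepFun_of_abs_le h_indep
    (fun i => hη.comp (measurable_pi_apply i)) (s := univ)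
    (fun i _ => (integral_comp_eval (μ := fun _ : ι => μ) (i := i)
      hη.aestronglyMeasurable).trans hη0)
    (fun i _ => (Measure.tendsto_eval_ae_ae (μ := fun _ : ι => μ) (i := i)).eventually hηB)
    (fun i _ => (integral_comp_eval (μ := fun _ : ι => μ) (i := i) (f := fun x => η x ^ 2)
      (hη.pow_const 2).aestronglyMeasurable).trans_le hηv) hB hv ht
  simpa only [card_univ] using this

end ProbabilityTheory

theorem bernstein_exponent_le {m A B c ε γ : ℝ} (hm : 0 ≤ m) (hB : 0 ≤ B) (hc : 0 < c)
    (hε : 0 < ε) (hεA : ε ≤ A) (hγ0 : 0 ≤ γ) (hγ1 : γ ≤ 1) :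
    -(m * (γ * √ε * √A) ^ 2) / (2 * (c * A + B * (γ * √ε * √A) / 3)) ≤
      -(3 * γ ^ 2 * m * ε) / (6 * c + 2 * B) := by
  have hA : 0 < A := hε.trans_le hεA
  have htA : γ * √ε * √A ≤ A :=
    calc γ * √ε * √A ≤ 1 * √A * √A := by gcongr
      _ = A := by rw [one_mul, mul_self_sqrt hA.le]
  have ht2 : (γ * √ε * √A) ^ 2 = γ ^ 2 * ε * A := by
    rw [mul_pow, mul_pow, sq_sqrt hε.le, sq_sqrt hA.le]
  rw [neg_div, neg_div, neg_le_neg_iff, div_le_div_iff₀ (by positivity) (by positivity), ht2]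
  have : 0 ≤ m * γ ^ 2 * ε * B * (A - γ * √ε * √A) := by
    have := sub_nonneg.2 htA
    positivity
  nlinarith

theorem mul_le_sum_sub_of_div_sqrt_gt {m : ℕ} (hm : m ≠ 0) {a : Fin m → ℝ} {x A ε γ : ℝ}
    (hA : 0 < A) (h : (x - (1 / (m : ℝ)) * ∑ i, a i) / √A > γ * √ε) :
    m * (γ * √ε * √A) ≤ ∑ i, (x - a i) := by
  rw [gt_iff_lt, lt_div_iff₀ (sqrt_pos.2 hA)] at h
  have hsum : ∑ i, (x - a i) = m * (x - (1 / (m : ℝ)) * ∑ i, a i) := by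
    rw [sum_sub_distrib, sum_const, card_univ, Fintype.card_fin, nsmul_eq_mul]
    field_simp
  rw [hsum]
  gcongr

/-- one-sided Bernstein-type ratio probability inequality.
If ξ has mean μ̄ ≥ 0, |ξ − μ̄| ≤ B a.s. and ∫ξ² ≤ c∫ξ, then for ε > 0, 0 < γ ≤ 1 and
m ≥ 1, the μ^{⊗m}-probability that (μ̄ − (1/m)Σξ(zᵢ))/√(μ̄+ε) > γ√ε is at most
exp(−3γ²mε/(6c+2B)). -/
theorem stmt5 {X : Type*} [MeasurableSpace X] (μ : Measure X) [IsProbabilityMeasure μ]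
    (ξ : X → ℝ) (hmeas : Measurable ξ) (hint : Integrable ξ μ)
    (hmean : 0 ≤ ∫ x, ξ x ∂μ)
    (B c : ℝ) (hB : 0 < B) (hc : 0 < c)
    (hbd : ∀ᵐ x ∂μ, |ξ x - ∫ y, ξ y ∂μ| ≤ B)
    (hvar : ∫ x, (ξ x) ^ 2 ∂μ ≤ c * ∫ x, ξ x ∂μ)
    (ε γ : ℝ) (hε : 0 < ε) (hγ0 : 0 < γ) (hγ1 : γ ≤ 1)
    (m : ℕ) (hm : 1 ≤ m) :
    Measure.pi (fun _ : Fin m => μ)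
        {z : Fin m → X |
          ((∫ x, ξ x ∂μ) - (1 / (m : ℝ)) * ∑ i, ξ (z i)) /
              Real.sqrt ((∫ x, ξ x ∂μ) + ε) > γ * Real.sqrt ε} ≤
      ENNReal.ofReal (Real.exp (-(3 * γ ^ 2 * m * ε) / (6 * c + 2 * B))) := by
  set mean := ∫ x, ξ x ∂μ
  have hcentred : μ[fun x => mean - ξ x] = 0 := by
    rw [integral_sub (integrable_const _) hint]
    simp [mean]
  have hsecond : ∫ x, (mean - ξ x) ^ 2 ∂μ ≤ c * (mean + ε) :=
    calc ∫ x, (mean - ξ x) ^ 2 ∂μ = variance ξ μ := by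
          rw [variance_eq_integral hmeas.aemeasurable]
          congr 1 with x
          ring
      _ ≤ ∫ x, ξ x ^ 2 ∂μ := variance_le_expectation_sq hmeas.aestronglyMeasurable
      _ ≤ c * (mean + ε) := hvar.trans (by gcongr; linarith)
  have hbern := measureReal_pi_sum_ge_le_of_abs_le (ι := Fin m) (t := γ * √ε * √(mean + ε))
    (hmeas.const_sub mean) hcentred (hbd.mono fun x hx => by rwa [abs_sub_comm]) hsecond hB.le
    (by positivity) (by positivity)
  have hbound := ENNReal.ofReal_le_ofReal <| hbern.trans <| exp_le_exp.2 <|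
    bernstein_exponent_le (Nat.cast_nonneg _) hB.le hc hε (by linarith) hγ0.le hγ1
  rw [ofReal_measureReal, Fintype.card_fin] at hbound
  exact le_trans (measure_mono fun z hz =>
    mul_le_sum_sub_of_div_sqrt_gt (by omega) (by positivity) hz) hbound
end

section
/- Let J ≥ 0 be an integer, Ω_J = {0,…,2^J−1}², and let u : Ω_J → ℝ. Define the periodized function H : ℝ² → ℝ by H(x) = Σ_{m∈ℤ²} Σ_{k∈Ω_J} u[k]·φ(2^J(x+m) − k) (for each x this is a finite sum). Then ∫_{[0,1)²} H(x)² dx ≤ (n²/2^{2J}) · Σ_{k∈Ω_J} u[k]². -/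
noncomputable section

open MeasureTheory

/-- cardinal B-spline of order n: B₁ = 1_{[0,1)}, B_n = B_{n−1} ∗ B₁ -/
def Bsp : ℕ → ℝ → ℝ
  | 0 => fun _ => 0
  | 1 => Set.indicator (Set.Ico 0 1) 1
  | n + 2 => fun x => ∫ t : ℝ, Bsp (n + 1) t * Set.indicator (Set.Ico 0 1) 1 (x - t)

/-- tensor-product B-spline φ(x₁,x₂) = B_n(x₁)·B_n(x₂) -/
def phi2 (n : ℕ) (x : ℝ × ℝ) : ℝ := Bsp n x.1 * Bsp n x.2

/-!
For `x` in the unit square only the translates with `m ∈ [0, n]²` contribute, and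
`(m, k) ↦ k - 2^J m` identifies the pairs `(m, k)` with `ℤ²`. Since `B_n` is supported in `[0, n)`
and bounded by `1`, at most `n` integer translates of it are nonzero at any point, so
`∑_{m,k} φ(2^J(x+m) - k) ≤ n²`, and weighted Cauchy–Schwarz gives
`H(x)² ≤ n² ∑_{m,k} u[k]² φ(2^J(x+m) - k)`. On integrating, the translates of `[0, 1)` by `m` tile
the line, so each `k` contributes at most `u[k]² (2^{-J} ∫ B_n)² ≤ u[k]² 2^{-2J}`.
-/

open Set Function ContinuousLinearMap
open scoped Convolution

lemma Bsp_add_two (n : ℕ) :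
    Bsp (n + 2) = Bsp (n + 1) ⋆[lsmul ℝ ℝ] (Ico (0 : ℝ) 1).indicator 1 := by
  ext x
  simp [Bsp, convolution_def]

lemma integrable_indicator_Ico_one : Integrable ((Ico (0 : ℝ) 1).indicator (1 : ℝ → ℝ)) :=
  (integrable_indicator_iff measurableSet_Ico).2 (integrableOn_const measure_Ico_lt_top.ne)

lemma integral_indicator_Ico_one : ∫ x, (Ico (0 : ℝ) 1).indicator (1 : ℝ → ℝ) x = 1 := by
  simp [integral_indicator measurableSet_Ico]

lemma integrable_Bsp : ∀ n, Integrable (Bsp n)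
  | 0 => integrable_zero ℝ ℝ volume
  | 1 => integrable_indicator_Ico_one
  | n + 2 => by
    rw [Bsp_add_two]
    exact (integrable_Bsp (n + 1)).integrable_convolution _ integrable_indicator_Ico_one

lemma integral_Bsp_le_one : ∀ n, ∫ x, Bsp n x ≤ 1
  | 0 => by simp [Bsp]
  | 1 => integral_indicator_Ico_one.le
  | n + 2 => by
    rw [Bsp_add_two, integral_convolution _ (integrable_Bsp _) integrable_indicator_Ico_one,
      integral_indicator_Ico_one]
    simpa using integral_Bsp_le_one (n + 1)

lemma Bsp_nonneg : ∀ n x, 0 ≤ Bsp n x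
  | 0, _ => le_rfl
  | 1, x => indicator_nonneg (fun _ _ => zero_le_one) x
  | _ + 2, _ => integral_nonneg fun _ =>
      mul_nonneg (Bsp_nonneg _ _) (indicator_nonneg (fun _ _ => zero_le_one) _)

lemma Bsp_le_one : ∀ n x, Bsp n x ≤ 1
  | 0, _ => zero_le_one
  | 1, _ => indicator_apply_le' (fun _ => le_rfl) (fun _ => zero_le_one)
  | n + 2, x => by
    refine le_trans ?_ (integral_Bsp_le_one (n + 1))
    refine integral_mono_of_nonneg (.of_forall fun _ => ?_) (integrable_Bsp _)
      (.of_forall fun _ => ?_)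
    · exact mul_nonneg (Bsp_nonneg _ _) (indicator_nonneg (fun _ _ => zero_le_one) _)
    · exact mul_le_of_le_one_right (Bsp_nonneg _ _)
        (indicator_apply_le' (fun _ => le_rfl) (fun _ => zero_le_one))

lemma support_Bsp_subset : ∀ n, support (Bsp n) ⊆ Ico (0 : ℝ) n
  | 0 => by simp [Bsp]
  | 1 => by rw [Nat.cast_one]; exact support_indicator_subset
  | n + 2 => by
    rw [Bsp_add_two]
    refine (support_convolution_subset _).trans ?_
    refine (add_subset_add (support_Bsp_subset (n + 1)) support_indicator_subset).trans ?_
    rintro _ ⟨a, ⟨ha0, ha⟩, b, ⟨hb0, hb⟩, rfl⟩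
    push_cast at ha ⊢
    constructor <;> linarith

lemma Bsp_eq_zero_of_notMem {n : ℕ} {x : ℝ} (hx : x ∉ Ico (0 : ℝ) n) : Bsp n x = 0 :=
  notMem_support.1 fun h => hx (support_Bsp_subset n h)

lemma setIntegral_Ico_zero_one_comp_add_right {E : Type*} [NormedAddCommGroup E]
    [NormedSpace ℝ E] (f : ℝ → E) (a : ℝ) :
    ∫ x in Ico (0 : ℝ) 1, f (x + a) = ∫ x in Ico a (a + 1), f x := by
  simpa using (measurePreserving_add_right volume a).setIntegral_preimage_emb
    (measurableEmbedding_addRight _) f (Ico a (a + 1))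

lemma integral_Bsp_comp_mul_sub {c : ℝ} (hc : 0 < c) (n : ℕ) (k : ℝ) :
    ∫ x, Bsp n (c * x - k) = c⁻¹ * ∫ x, Bsp n x := by
  rw [Measure.integral_comp_mul_left (fun y => Bsp n (y - k)), integral_sub_right_eq_self,
    abs_of_pos (inv_pos.2 hc), smul_eq_mul]

lemma sum_setIntegral_Ico_Bsp_le {c : ℝ} (hc : 0 < c) (n : ℕ) (k : ℝ) (M : Finset ℤ) :
    ∑ m ∈ M, ∫ x in Ico (0 : ℝ) 1, Bsp n (c * (x + m) - k) ≤ c⁻¹ := by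
  have hint : Integrable fun x => Bsp n (c * x - k) :=
    ((integrable_Bsp n).comp_sub_right k).comp_mul_left' hc.ne'
  calc ∑ m ∈ M, ∫ x in Ico (0 : ℝ) 1, Bsp n (c * (x + m) - k)
      = ∫ x in ⋃ m ∈ M, Ico (m : ℝ) (m + 1), Bsp n (c * x - k) := by
        rw [integral_biUnion_finset M (fun _ _ => measurableSet_Ico)
          ((pairwise_disjoint_Ico_intCast ℝ).set_pairwise _) (fun _ _ => hint.integrableOn)]
        exact Finset.sum_congr rfl fun m _ =>
          setIntegral_Ico_zero_one_comp_add_right (fun x => Bsp n (c * x - k)) m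
    _ ≤ ∫ x, Bsp n (c * x - k) :=
        setIntegral_le_integral hint (.of_forall fun _ => Bsp_nonneg _ _)
    _ = c⁻¹ * ∫ x, Bsp n x := integral_Bsp_comp_mul_sub hc n k
    _ ≤ c⁻¹ := mul_le_of_le_one_right (inv_nonneg.2 hc.le) (integral_Bsp_le_one n)

lemma integrable_Bsp_mul_add_sub (n : ℕ) {c : ℝ} (hc : c ≠ 0) (a k : ℝ) :
    Integrable fun x => Bsp n (c * (x + a) - k) :=
  (((integrable_Bsp n).comp_sub_right k).comp_mul_left' hc).comp_add_right a

lemma Bsp_mul_add_sub_eq_zero {n N : ℕ} {x : ℝ} (hx : x ∈ Ico (0 : ℝ) 1) (k : Fin N) {m : ℤ}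
    (hm : m ∉ Finset.Icc (0 : ℤ) n) : Bsp n (N * (x + m) - k) = 0 := by
  apply Bsp_eq_zero_of_notMem
  obtain ⟨hx0, hx1⟩ := hx
  have hk : (k : ℝ) + 1 ≤ N := by exact_mod_cast k.2
  have hk0 : (0 : ℝ) ≤ k := k.1.cast_nonneg
  rw [Finset.mem_Icc, not_and_or, not_le, not_le] at hm
  rw [mem_Ico, not_and_or, not_le, not_lt]
  rcases hm with hm | hm
  · have : (m : ℝ) + 1 ≤ 0 := by exact_mod_cast hm
    left; nlinarith
  · have : (n : ℝ) + 1 ≤ m := by exact_mod_cast hm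
    right; nlinarith

lemma sum_Bsp_sub_intCast_le (n : ℕ) (y : ℝ) (I : Finset ℤ) : ∑ i ∈ I, Bsp n (y - i) ≤ n := by
  set W := Finset.Icc (⌊y⌋ - n + 1) ⌊y⌋
  have hW : ∀ i ∈ I, i ∉ W → Bsp n (y - i) = 0 := by
    intro i _ hi
    refine Bsp_eq_zero_of_notMem fun ⟨h0, hn⟩ => hi (Finset.mem_Icc.2 ⟨?_, ?_⟩)
    · have : ⌊y⌋ < i + n := Int.floor_lt.2 (by push_cast; linarith)
      omega
    · exact Int.le_floor.2 (by linarith)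
  calc ∑ i ∈ I, Bsp n (y - i) = ∑ i ∈ I ∩ W, Bsp n (y - i) :=
        (Finset.sum_subset Finset.inter_subset_left fun i hi hiW =>
          hW i hi fun h => hiW (Finset.mem_inter.2 ⟨hi, h⟩)).symm
    _ ≤ (I ∩ W).card • 1 := Finset.sum_le_card_nsmul _ _ _ fun i _ => Bsp_le_one n _
    _ ≤ W.card • (1 : ℝ) := by
        gcongr
        exact Finset.inter_subset_right
    _ = n := by simp [W]

lemma sum_sum_Bsp_mul_add_sub_le (n N : ℕ) [NeZero N] (x : ℝ) (M : Finset ℤ) :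
    ∑ m ∈ M, ∑ k : Fin N, Bsp n (N * (x + m) - k) ≤ n := by
  -- `e (m, k) = k - N m`
  set e : ℤ × Fin N → ℤ := fun p => (Int.divModEquiv N).symm (-p.1, p.2)
  have he : Injective e := (Int.divModEquiv N).symm.injective.comp
    (Prod.map_injective.2 ⟨neg_injective, injective_id⟩)
  calc ∑ m ∈ M, ∑ k : Fin N, Bsp n (N * (x + m) - k)
      = ∑ p ∈ M ×ˢ Finset.univ, Bsp n (N * x - e p) := by
        rw [Finset.sum_product]
        refine Finset.sum_congr rfl fun m _ => Finset.sum_congr rfl fun k _ => ?_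
        simp only [e, Int.divModEquiv_symm_apply]
        push_cast
        ring_nf
    _ = ∑ i ∈ (M ×ˢ Finset.univ).image e, Bsp n (N * x - i) :=
        (Finset.sum_image (f := fun i : ℤ => Bsp n (N * x - i)) fun _ _ _ _ h => he h).symm
    _ ≤ n := sum_Bsp_sub_intCast_le n _ _

lemma Finset.sum_product_sum_product_mul {ι κ R : Type*} [CommSemiring R] (M : Finset ι)
    (K : Finset κ) (f g : ι → κ → R) :
    ∑ m ∈ M ×ˢ M, ∑ k ∈ K ×ˢ K, f m.1 k.1 * g m.2 k.2 =
      (∑ m ∈ M, ∑ k ∈ K, f m k) * ∑ m ∈ M, ∑ k ∈ K, g m k := by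
  simp only [Finset.sum_product, Finset.sum_mul_sum]

def phi2Scaled (n N : ℕ) (x : ℝ × ℝ) (m : ℤ × ℤ) (k : Fin N × Fin N) : ℝ :=
  phi2 n (N * (x.1 + m.1) - k.1, N * (x.2 + m.2) - k.2)

lemma phi2Scaled_nonneg (n N : ℕ) (x : ℝ × ℝ) (m : ℤ × ℤ) (k : Fin N × Fin N) :
    0 ≤ phi2Scaled n N x m k :=
  mul_nonneg (Bsp_nonneg _ _) (Bsp_nonneg _ _)

section
variable {n N : ℕ} {x : ℝ × ℝ}

lemma phi2Scaled_eq_zero (hx : x ∈ Ico (0 : ℝ) 1 ×ˢ Ico (0 : ℝ) 1) (k : Fin N × Fin N)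
    {m : ℤ × ℤ} (hm : m ∉ Finset.Icc 0 (n : ℤ) ×ˢ Finset.Icc 0 (n : ℤ)) :
    phi2Scaled n N x m k = 0 := by
  rw [Finset.mem_product, not_and_or] at hm
  rcases hm with hm | hm
  · simp [phi2Scaled, phi2, Bsp_mul_add_sub_eq_zero hx.1 k.1 hm]
  · simp [phi2Scaled, phi2, Bsp_mul_add_sub_eq_zero hx.2 k.2 hm]

lemma sum_sum_phi2Scaled_le [NeZero N] (M : Finset ℤ) :
    ∑ m ∈ M ×ˢ M, ∑ k : Fin N × Fin N, phi2Scaled n N x m k ≤ (n : ℝ) ^ 2 := by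
  simp only [phi2Scaled, phi2, ← Finset.univ_product_univ]
  rw [Finset.sum_product_sum_product_mul
    (f := fun (m : ℤ) (k : Fin N) => Bsp n (N * (x.1 + m) - k))
    (g := fun (m : ℤ) (k : Fin N) => Bsp n (N * (x.2 + m) - k)), sq]
  exact mul_le_mul (sum_sum_Bsp_mul_add_sub_le n N _ M) (sum_sum_Bsp_mul_add_sub_le n N _ M)
    (Finset.sum_nonneg fun _ _ => Finset.sum_nonneg fun _ _ => Bsp_nonneg _ _) n.cast_nonneg

lemma sq_tsum_sum_mul_phi2Scaled_le [NeZero N] (u : Fin N × Fin N → ℝ)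
    (hx : x ∈ Ico (0 : ℝ) 1 ×ˢ Ico (0 : ℝ) 1) :
    (∑' m : ℤ × ℤ, ∑ k, u k * phi2Scaled n N x m k) ^ 2 ≤
      (n : ℝ) ^ 2 * ∑ m ∈ Finset.Icc 0 (n : ℤ) ×ˢ Finset.Icc 0 (n : ℤ), ∑ k,
        u k ^ 2 * phi2Scaled n N x m k := by
  set B := Finset.Icc 0 (n : ℤ) ×ˢ Finset.Icc 0 (n : ℤ)
  rw [tsum_eq_sum (s := B) fun m hm => Finset.sum_eq_zero fun k _ => by
    rw [phi2Scaled_eq_zero hx k hm, mul_zero]]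
  simp only [← Finset.sum_product']
  calc (∑ p ∈ B ×ˢ Finset.univ, u p.2 * phi2Scaled n N x p.1 p.2) ^ 2
      ≤ (∑ p ∈ B ×ˢ Finset.univ, phi2Scaled n N x p.1 p.2) *
          ∑ p ∈ B ×ˢ Finset.univ, u p.2 ^ 2 * phi2Scaled n N x p.1 p.2 :=
        Finset.sum_sq_le_sum_mul_sum_of_sq_le_mul _ (fun _ _ => phi2Scaled_nonneg ..)
          (fun _ _ => mul_nonneg (sq_nonneg _) (phi2Scaled_nonneg ..))
          fun _ _ => le_of_eq (by ring)
    _ ≤ (n : ℝ) ^ 2 * ∑ p ∈ B ×ˢ Finset.univ, u p.2 ^ 2 * phi2Scaled n N x p.1 p.2 := by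
        gcongr
        · exact Finset.sum_nonneg fun _ _ => mul_nonneg (sq_nonneg _) (phi2Scaled_nonneg ..)
        · rw [Finset.sum_product']
          exact sum_sum_phi2Scaled_le _

lemma setIntegral_phi2Scaled (m : ℤ × ℤ) (k : Fin N × Fin N) :
    ∫ x in Ico (0 : ℝ) 1 ×ˢ Ico (0 : ℝ) 1, phi2Scaled n N x m k =
      (∫ x in Ico (0 : ℝ) 1, Bsp n (N * (x + m.1) - k.1)) *
        ∫ x in Ico (0 : ℝ) 1, Bsp n (N * (x + m.2) - k.2) := by
  rw [Measure.volume_eq_prod]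
  exact setIntegral_prod_mul (fun x => Bsp n (N * (x + m.1) - k.1))
    (fun x => Bsp n (N * (x + m.2) - k.2)) _ _

lemma integrable_phi2Scaled [NeZero N] (m : ℤ × ℤ) (k : Fin N × Fin N) :
    Integrable fun x => phi2Scaled n N x m k :=
  (integrable_Bsp_mul_add_sub n (NeZero.ne _) _ _).mul_prod
    (integrable_Bsp_mul_add_sub n (NeZero.ne _) _ _)

lemma setIntegral_sum_sum_sq_mul_phi2Scaled_le [NeZero N] (u : Fin N × Fin N → ℝ)
    (M : Finset ℤ) :
    ∫ x in Ico (0 : ℝ) 1 ×ˢ Ico (0 : ℝ) 1, ∑ m ∈ M ×ˢ M, ∑ k, u k ^ 2 * phi2Scaled n N x m k ≤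
      ((N : ℝ) ^ 2)⁻¹ * ∑ k, u k ^ 2 := by
  have hN : (0 : ℝ) < N := Nat.cast_pos.2 (Nat.pos_of_neZero N)
  rw [integral_finsetSum _ fun m _ => integrable_finsetSum _ fun k _ =>
    ((integrable_phi2Scaled m k).const_mul _).integrableOn]
  simp_rw [integral_finsetSum _ fun k _ => ((integrable_phi2Scaled _ k).const_mul _).integrableOn,
    integral_const_mul, setIntegral_phi2Scaled]
  rw [Finset.sum_comm, Finset.mul_sum]
  refine Finset.sum_le_sum fun k _ => ?_
  rw [← Finset.mul_sum, Finset.sum_product]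
  simp only [← Finset.sum_mul_sum]
  rw [mul_comm ((N : ℝ) ^ 2)⁻¹, ← inv_pow, sq (N : ℝ)⁻¹]
  refine mul_le_mul_of_nonneg_left (mul_le_mul (sum_setIntegral_Ico_Bsp_le hN n _ M)
    (sum_setIntegral_Ico_Bsp_le hN n _ M) ?_ (inv_nonneg.2 hN.le)) (sq_nonneg _)
  exact Finset.sum_nonneg fun _ _ =>
    setIntegral_nonneg measurableSet_Ico fun _ _ => Bsp_nonneg _ _

theorem setIntegral_sq_tsum_sum_mul_phi2Scaled_le (n N : ℕ) [NeZero N] (u : Fin N × Fin N → ℝ) :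
    ∫ x in Ico (0 : ℝ) 1 ×ˢ Ico (0 : ℝ) 1,
        (∑' m : ℤ × ℤ, ∑ k, u k * phi2Scaled n N x m k) ^ 2 ≤
      (n : ℝ) ^ 2 / (N : ℝ) ^ 2 * ∑ k, u k ^ 2 := by
  set B := Finset.Icc 0 (n : ℤ) ×ˢ Finset.Icc 0 (n : ℤ)
  calc _ ≤ ∫ x in Ico (0 : ℝ) 1 ×ˢ Ico (0 : ℝ) 1,
          (n : ℝ) ^ 2 * ∑ m ∈ B, ∑ k, u k ^ 2 * phi2Scaled n N x m k := by
        refine integral_mono_of_nonneg (.of_forall fun _ => sq_nonneg _) ?_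
          (ae_restrict_of_forall_mem (measurableSet_Ico.prod measurableSet_Ico)
            fun x hx => sq_tsum_sum_mul_phi2Scaled_le u hx)
        exact (integrable_finsetSum _ fun m _ => integrable_finsetSum _ fun k _ =>
          (integrable_phi2Scaled m k).const_mul _).integrableOn.const_mul _
    _ ≤ (n : ℝ) ^ 2 * (((N : ℝ) ^ 2)⁻¹ * ∑ k, u k ^ 2) := by
        rw [integral_const_mul]
        exact mul_le_mul_of_nonneg_left (setIntegral_sum_sum_sq_mul_phi2Scaled_le u _)
          (sq_nonneg _)
    _ = (n : ℝ) ^ 2 / (N : ℝ) ^ 2 * ∑ k, u k ^ 2 := by ring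
end

theorem stmt9_general (n : ℕ) (J : ℕ) (u : Fin (2 ^ J) × Fin (2 ^ J) → ℝ) :
    ∫ x in Set.Ico (0:ℝ) 1 ×ˢ Set.Ico (0:ℝ) 1,
        (∑' m : ℤ × ℤ, ∑ k : Fin (2 ^ J) × Fin (2 ^ J),
          u k * phi2 n (2 ^ J * (x.1 + (m.1 : ℝ)) - (k.1 : ℝ),
                        2 ^ J * (x.2 + (m.2 : ℝ)) - (k.2 : ℝ))) ^ 2 ≤
      ((n : ℝ) ^ 2 / 2 ^ (2 * J)) * ∑ k, u k ^ 2 := by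
  have h := setIntegral_sq_tsum_sum_mul_phi2Scaled_le n (2 ^ J) u
  simp only [phi2Scaled, Nat.cast_pow, Nat.cast_ofNat, ← pow_mul, mul_comm J 2] at h
  exact h

/-- adjoint Bessel-type inequality: for u : Ω_J → ℝ and the periodized
synthesis H(x) = Σ_{m∈ℤ²}Σ_{k∈Ω_J} u[k]φ(2^J(x+m)−k),
∫_{[0,1)²} H² ≤ (n²/2^{2J})·Σ_k u[k]². -/
theorem stmt9 (n : ℕ) (hn : 1 ≤ n) (J : ℕ) (u : Fin (2 ^ J) × Fin (2 ^ J) → ℝ) :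
    ∫ x in Set.Ico (0:ℝ) 1 ×ˢ Set.Ico (0:ℝ) 1,
        (∑' m : ℤ × ℤ, ∑ k : Fin (2 ^ J) × Fin (2 ^ J),
          u k * phi2 n (2 ^ J * (x.1 + (m.1 : ℝ)) - (k.1 : ℝ),
                        2 ^ J * (x.2 + (m.2 : ℝ)) - (k.2 : ℝ))) ^ 2 ≤
      ((n : ℝ) ^ 2 / 2 ^ (2 * J)) * ∑ k, u k ^ 2 :=
  stmt9_general n J u
end
end

section
/- Let M > 0, T ≥ 0 and t > 0, and let M̃ = { u : Ω → ℝ : ‖u‖_{ℓ∞(Ω)} ≤ M and ‖∇u‖₁ ≤ T }. Set R = 2N(N−1) (the number of entries of the discrete gradient), K = ⌈2T/t⌉ and κ = ⌈2M/t⌉. Then there exist points v₁,…,v_P ∈ ℝ^Ω with P ≤ (4κ+2)·(2(R+K−1))^K such that every u ∈ M̃ satisfies ‖u − v_j‖_{ℓ∞(Ω)} ≤ t for some j ≤ P. -/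
/-!
Read `u` along the boustrophedon path through the grid: consecutive points are neighbours and
no edge of the grid is traversed twice, so the resulting sequence of `N²` values has total
variation at most `‖∇u‖₁ ≤ T`. Such a sequence is approximated within `t` by a step function
with steps `t/2`: quantize the start value and the (monotone) cumulative upward and downward
variations with `⌊2 · / t⌋`; each of the three roundings costs less than `t/2`, and the
quantized variations make at most `K` unit jumps in total. The step function is thus coded by
a start level in `[-κ, κ]` and by where each of `K` unit jumps sits: at one of the `N² - 1`
steps of the path, upwards or downwards, or nowhere.
-/

noncomputable section

/-- discrete total variation (no wrap-around) on the grid {0,…,N−1}² ≃ (ℤ/Nℤ)² -/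
def tv (N : ℕ) [NeZero N] (u : ZMod N × ZMod N → ℝ) : ℝ :=
  (∑ i ∈ Finset.range (N - 1), ∑ j ∈ Finset.range N,
      |u ((i : ZMod N) + 1, (j : ZMod N)) - u ((i : ZMod N), (j : ZMod N))|) +
  (∑ i ∈ Finset.range N, ∑ j ∈ Finset.range (N - 1),
      |u ((i : ZMod N), (j : ZMod N) + 1) - u ((i : ZMod N), (j : ZMod N))|)

open Finset

theorem exists_card_filter_lt_eq {F : ℕ → ℕ} (hF : Monotone F) (h0 : F 0 = 0) {L K : ℕ}
    (hL : F L ≤ K) : ∃ g : Fin K → Fin (L + 1), ∀ m ≤ L, #{j | (g j : ℕ) < m} = F m := by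
  let G : ℕ → ℕ := fun j => #{i ∈ range L | F (i + 1) ≤ j}
  have hG : ∀ j, G j ≤ L := fun j => (card_filter_le _ _).trans (card_range L).le
  have hG_lt : ∀ j, ∀ m ≤ L, G j < m ↔ j < F m := by
    intro j m hm
    rw [← not_le, ← not_le, not_iff_not]
    constructor
    · intro hmG
      by_contra! hjF
      have hm0 : m ≠ 0 := by rintro rfl; omega
      have : {i ∈ range L | F (i + 1) ≤ j} ⊆ range (m - 1) := fun i hi => by
        have := hF.reflect_lt ((mem_filter.1 hi).2.trans_lt hjF)
        rw [mem_range]; omega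
      have : G j ≤ m - 1 := (card_le_card this).trans (card_range _).le
      omega
    · intro hFj
      have : range m ⊆ {i ∈ range L | F (i + 1) ≤ j} := fun i hi => by
        rw [mem_range] at hi
        exact mem_filter.2 ⟨mem_range.2 (by omega), (hF (by omega)).trans hFj⟩
      simpa using card_le_card this
  refine ⟨fun j => ⟨G j, Nat.lt_succ_of_le (hG j)⟩, fun m hm => ?_⟩
  simp only [hG_lt _ m hm]
  rw [Fin.card_filter_val_lt, min_eq_right ((hF hm).trans hL)]

section JumpSeq

variable {K n : ℕ}

/-- `g j < n` puts the `j`-th unit jump upwards after position `g j`, `n ≤ g j < 2 * n` puts it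
downwards after position `g j - n`, and `g j = 2 * n` discards it. -/
def jumpSeq (δ : ℝ) (z : ℤ) (g : Fin K → Fin (2 * n + 1)) (m : ℕ) : ℝ :=
  δ * (z + #{j | (g j : ℕ) < m} + #{j | (g j : ℕ) < n} - #{j | (g j : ℕ) < n + m})

theorem exists_jumpSeq_eq {α β : ℕ → ℕ} (hα : Monotone α) (hβ : Monotone β) (hα0 : α 0 = 0)
    (hβ0 : β 0 = 0) (hK : α n + β n ≤ K) (δ : ℝ) (z : ℤ) :
    ∃ g : Fin K → Fin (2 * n + 1), ∀ m ≤ n, jumpSeq δ z g m = δ * (z + α m - β m) := by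
  let F : ℕ → ℕ := fun m => α (min m n) + β (m - n)
  have hF : Monotone F := fun a b h => add_le_add (hα (min_le_min_right n h)) (hβ (by omega))
  obtain ⟨g, hg⟩ := exists_card_filter_lt_eq hF (by simp [F, hα0, hβ0])
    (show F (2 * n) ≤ K by simpa [F, two_mul] using hK)
  refine ⟨g, fun m hm => ?_⟩
  rw [jumpSeq, hg m (by omega), hg n (by omega), hg (n + m) (by omega)]
  simp only [F, min_eq_left hm, min_self, min_eq_right (Nat.le_add_right n m),
    Nat.sub_eq_zero_of_le hm, Nat.sub_self, Nat.add_sub_cancel_left, hβ0]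
  push_cast
  ring

theorem exists_abs_sub_jumpSeq_lt (s : ℕ → ℝ) {δ T : ℝ} (hδ : 0 < δ) (hK : T ≤ δ * K)
    (hs : ∑ i ∈ range n, |s (i + 1) - s i| ≤ T) :
    ∃ g : Fin K → Fin (2 * n + 1), ∀ m ≤ n, |s m - jumpSeq δ ⌊s 0 / δ⌋ g m| < 2 * δ := by
  -- Rounding the monotone cumulative variations, not `s` itself, keeps the jumps below `T / δ`.
  let A : ℕ → ℝ := fun m => ∑ i ∈ range m, (s (i + 1) - s i)⁺
  let B : ℕ → ℝ := fun m => ∑ i ∈ range m, (s (i + 1) - s i)⁻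
  have hA : Monotone A := fun a b h =>
    sum_le_sum_of_subset_of_nonneg (range_mono h) fun _ _ _ => posPart_nonneg _
  have hB : Monotone B := fun a b h =>
    sum_le_sum_of_subset_of_nonneg (range_mono h) fun _ _ _ => negPart_nonneg _
  have hAB : ∀ m, s m = s 0 + A m - B m := fun m => by
    simp only [A, B, add_sub_assoc, ← sum_sub_distrib, posPart_sub_negPart, sum_range_sub]
    ring
  have hABn : A n + B n ≤ T := by
    simpa only [A, B, ← sum_add_distrib, posPart_add_negPart] using hs
  have floor_spec : ∀ {x : ℝ}, 0 ≤ x → δ * ⌊x / δ⌋₊ ≤ x ∧ x < δ * ⌊x / δ⌋₊ + δ := fun hx =>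
    ⟨by rw [mul_comm, ← le_div_iff₀ hδ]; exact Nat.floor_le (by positivity),
      by rw [← mul_add_one, mul_comm, ← div_lt_iff₀ hδ]; exact Nat.lt_floor_add_one _⟩
  have hA0 : ∀ m, 0 ≤ A m := fun m => sum_nonneg fun _ _ => posPart_nonneg _
  have hB0 : ∀ m, 0 ≤ B m := fun m => sum_nonneg fun _ _ => negPart_nonneg _
  have hαβ : ⌊A n / δ⌋₊ + ⌊B n / δ⌋₊ ≤ K := by
    obtain ⟨hAn, -⟩ := floor_spec (hA0 n)
    obtain ⟨hBn, -⟩ := floor_spec (hB0 n)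
    have : δ * ((⌊A n / δ⌋₊ + ⌊B n / δ⌋₊ : ℕ) : ℝ) ≤ δ * K := by push_cast; linarith
    exact_mod_cast le_of_mul_le_mul_left this hδ
  obtain ⟨g, hg⟩ := exists_jumpSeq_eq (α := fun m => ⌊A m / δ⌋₊) (β := fun m => ⌊B m / δ⌋₊)
    (fun a b h => Nat.floor_mono (by gcongr; exact hA h))
    (fun a b h => Nat.floor_mono (by gcongr; exact hB h)) (by simp [A]) (by simp [B]) hαβ δ
    ⌊s 0 / δ⌋
  refine ⟨g, fun m hm => ?_⟩
  have h₁ := Int.sub_floor_div_mul_nonneg (s 0) hδ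
  have h₂ := Int.sub_floor_div_mul_lt (s 0) hδ
  obtain ⟨hA₁, hA₂⟩ := floor_spec (hA0 m)
  obtain ⟨hB₁, hB₂⟩ := floor_spec (hB0 m)
  rw [hg m hm, hAB m, abs_lt]
  constructor <;> linarith

end JumpSeq

def snake (N m : ℕ) : ℕ × ℕ := (m / N, if Even (m / N) then m % N else N - 1 - m % N)

def snakeIndex (N : ℕ) (p : ℕ × ℕ) : ℕ := N * p.1 + if Even p.1 then p.2 else N - 1 - p.2

section Snake

variable {N : ℕ}

theorem snake_mul_add {i j : ℕ} (hj : j < N) :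
    snake N (N * i + j) = (i, if Even i then j else N - 1 - j) := by
  have hN : 0 < N := by omega
  simp [snake, Nat.mul_add_div hN, Nat.div_eq_of_lt hj, Nat.mod_eq_of_lt hj]

theorem snake_snakeIndex {p : ℕ × ℕ} (hp : p.2 < N) : snake N (snakeIndex N p) = p := by
  rw [snakeIndex, snake_mul_add (by split_ifs <;> omega)]
  by_cases h : Even p.1
  · simp [h]
  · simp only [h, if_false]
    exact Prod.ext rfl (by dsimp only; omega)

theorem snakeIndex_le {r : ℕ} {p : ℕ × ℕ} (h₁ : p.1 ≤ r) (h₂ : p.2 < N) :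
    snakeIndex N p ≤ N * r + (N - 1) := by
  have := Nat.mul_le_mul_left N h₁
  rw [snakeIndex]
  split_ifs <;> omega

variable (v : ℕ × ℕ → ℝ)

theorem sum_abs_sub_snake_row (i : ℕ) :
    ∑ j ∈ range (N - 1), |v (snake N (N * i + j + 1)) - v (snake N (N * i + j))| =
      ∑ j ∈ range (N - 1), |v (i, j + 1) - v (i, j)| := by
  have hsnake : ∀ j ∈ range (N - 1), |v (snake N (N * i + j + 1)) - v (snake N (N * i + j))| =
      |v (i, if Even i then j + 1 else N - 1 - (j + 1)) - v (i, if Even i then j else N - 1 - j)| :=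
    fun j hj => by
      rw [mem_range] at hj
      rw [add_assoc, snake_mul_add (by omega), snake_mul_add (by omega)]
  rw [sum_congr rfl hsnake]
  by_cases hi : Even i
  · simp only [hi, if_true]
  · simp only [hi, if_false]
    rw [← sum_range_reflect]
    refine sum_congr rfl fun j hj => ?_
    rw [mem_range] at hj
    rw [abs_sub_comm]
    congr 4 <;> omega

theorem abs_sub_snake_turn_le (hN : 0 < N) (i : ℕ) :
    |v (snake N (N * i + (N - 1) + 1)) - v (snake N (N * i + (N - 1)))| ≤
      ∑ j ∈ range N, |v (i + 1, j) - v (i, j)| := by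
  have hc : (if Even i then N - 1 else 0) < N := by split_ifs <;> omega
  rw [show N * i + (N - 1) + 1 = N * (i + 1) + 0 by rw [mul_add]; omega,
    snake_mul_add hN, snake_mul_add (by omega)]
  refine le_of_eq_of_le ?_ (single_le_sum (fun j _ => abs_nonneg _) (mem_range.2 hc))
  by_cases hi : Even i <;> simp [hi, Nat.even_add_one]

theorem sum_abs_sub_snake_le (hN : 0 < N) (r : ℕ) :
    ∑ m ∈ range (N * r + (N - 1)), |v (snake N (m + 1)) - v (snake N m)| ≤
      ∑ i ∈ range r, ∑ j ∈ range N, |v (i + 1, j) - v (i, j)| +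
        ∑ i ∈ range (r + 1), ∑ j ∈ range (N - 1), |v (i, j + 1) - v (i, j)| := by
  induction r with
  | zero => simpa using (sum_abs_sub_snake_row v 0).le
  | succ r ih =>
    rw [show N * (r + 1) + (N - 1) = N * r + (N - 1) + 1 + (N - 1) by rw [mul_add]; omega,
      sum_range_add, sum_range_succ, sum_range_succ, sum_range_succ _ (r + 1),
      ← sum_abs_sub_snake_row v (r + 1)]
    have hturn := abs_sub_snake_turn_le v hN r
    have hrow : ∑ j ∈ range (N - 1),
        |v (snake N (N * r + (N - 1) + 1 + j + 1)) - v (snake N (N * r + (N - 1) + 1 + j))| =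
        ∑ j ∈ range (N - 1),
          |v (snake N (N * (r + 1) + j + 1)) - v (snake N (N * (r + 1) + j))| := by
      rw [show N * r + (N - 1) + 1 = N * (r + 1) by rw [mul_add]; omega]
    linarith

end Snake

theorem tv_eq_sum (N : ℕ) [NeZero N] (u : ZMod N × ZMod N → ℝ) :
    tv N u = ∑ i ∈ range (N - 1), ∑ j ∈ range N,
        |u (((i + 1 : ℕ) : ZMod N), (j : ZMod N)) - u ((i : ZMod N), (j : ZMod N))| +
      ∑ i ∈ range N, ∑ j ∈ range (N - 1),
        |u ((i : ZMod N), ((j + 1 : ℕ) : ZMod N)) - u ((i : ZMod N), (j : ZMod N))| := by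
  simp only [tv, Nat.cast_succ]

theorem floor_div_mem_Icc {x M δ : ℝ} (hδ : 0 < δ) (hx : |x| ≤ M) :
    ⌊x / δ⌋ ∈ Icc (-(⌈M / δ⌉₊ : ℤ)) ⌈M / δ⌉₊ := by
  have hM : M / δ ≤ ⌈M / δ⌉₊ := Nat.le_ceil _
  have hx₁ : -(M / δ) ≤ x / δ := by
    rw [← neg_div]; exact div_le_div_of_nonneg_right (neg_le_of_abs_le hx) hδ.le
  have hx₂ : x / δ ≤ M / δ := div_le_div_of_nonneg_right (le_of_abs_le hx) hδ.le
  rw [mem_Icc, Int.le_floor, Int.floor_le_iff]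
  push_cast
  constructor <;> linarith

theorem exists_finset_cover_tv_le (N : ℕ) [NeZero N] (M T : ℝ) {δ : ℝ} (hδ : 0 < δ) :
    ∃ S : Finset (ZMod N × ZMod N → ℝ),
      #S ≤ (2 * ⌈M / δ⌉₊ + 1) * (2 * (N * (N - 1) + (N - 1)) + 1) ^ ⌈T / δ⌉₊ ∧
      ∀ u : ZMod N × ZMod N → ℝ, (∀ k, |u k| ≤ M) → tv N u ≤ T →
        ∃ v ∈ S, ∀ k, |u k - v k| < 2 * δ := by
  classical
  set κ := ⌈M / δ⌉₊
  set K := ⌈T / δ⌉₊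
  set n := N * (N - 1) + (N - 1)
  let approx : ℤ × (Fin K → Fin (2 * n + 1)) → ZMod N × ZMod N → ℝ := fun a k =>
    jumpSeq δ a.1 a.2 (snakeIndex N (k.1.val, k.2.val))
  refine ⟨(Icc (-κ : ℤ) κ ×ˢ univ).image approx, ?_, fun u hu htv => ?_⟩
  · refine card_image_le.trans_eq ?_
    simp only [card_product, Int.card_Icc, card_univ, Fintype.card_fun, Fintype.card_fin]
    congr 1
    omega
  let v : ℕ × ℕ → ℝ := fun p => u (p.1, p.2)
  have hs : ∑ m ∈ range n, |v (snake N (m + 1)) - v (snake N m)| ≤ T := by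
    refine (sum_abs_sub_snake_le v (NeZero.pos N) (N - 1)).trans (le_of_eq_of_le ?_ htv)
    rw [Nat.sub_add_cancel NeZero.one_le, tv_eq_sum]
  obtain ⟨g, hg⟩ := exists_abs_sub_jumpSeq_lt (v ∘ snake N) hδ
    ((div_le_iff₀' hδ).1 (Nat.le_ceil _)) hs
  refine ⟨approx (⌊v (snake N 0) / δ⌋, g),
    mem_image_of_mem _ (mem_product.2 ⟨floor_div_mem_Icc hδ (hu _), mem_univ _⟩), fun k => ?_⟩
  have hk : (k.1.val, k.2.val).2 < N := ZMod.val_lt _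
  simpa [v, snake_snakeIndex hk] using
    hg (snakeIndex N (k.1.val, k.2.val)) (snakeIndex_le (Nat.le_sub_one_of_lt (ZMod.val_lt _)) hk)

theorem stmt10_general (N : ℕ) (hN : 2 ≤ N) [NeZero N]
    (M T t : ℝ) (ht : 0 < t) :
    ∃ (P : ℕ) (v : Fin P → ZMod N × ZMod N → ℝ),
      P ≤ (4 * ⌈2 * M / t⌉₊ + 2) *
          (2 * (2 * N * (N - 1) + ⌈2 * T / t⌉₊ - 1)) ^ ⌈2 * T / t⌉₊ ∧
      ∀ u : ZMod N × ZMod N → ℝ, (∀ k, |u k| ≤ M) → tv N u ≤ T →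
        ∃ j : Fin P, ∀ k, |u k - v j k| ≤ t := by
  obtain ⟨S, hS, hcover⟩ := exists_finset_cover_tv_le N M T (half_pos ht)
  rw [show M / (t / 2) = 2 * M / t by ring, show T / (t / 2) = 2 * T / t by ring] at hS
  set K := ⌈2 * T / t⌉₊
  have hbase : (2 * (N * (N - 1) + (N - 1)) + 1) ^ K ≤ (2 * (2 * N * (N - 1) + K - 1)) ^ K := by
    rcases K.eq_zero_or_pos with hK | hK
    · simp [hK]
    have : N ≤ N * (N - 1) := Nat.le_mul_of_pos_right N (by omega)
    exact Nat.pow_le_pow_left (by rw [mul_assoc]; omega) K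
  refine ⟨#S, fun j => S.equivFin.symm j, hS.trans (Nat.mul_le_mul (by omega) hbase),
    fun u hu htv => ?_⟩
  obtain ⟨v, hv, huv⟩ := hcover u hu htv
  exact ⟨S.equivFin ⟨v, hv⟩, fun k => by simpa [mul_div_cancel₀] using (huv k).le⟩

/-- covering of the ℓ∞-bounded BV ball
M̃ = {u : ‖u‖∞ ≤ M, ‖∇u‖₁ ≤ T} by at most (4κ+2)·(2(R+K−1))^K closed ℓ∞-balls of
radius t, where R = 2N(N−1), K = ⌈2T/t⌉, κ = ⌈2M/t⌉. -/
theorem stmt10 (N : ℕ) (hN : 2 ≤ N) [NeZero N]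
    (M T t : ℝ) (hM : 0 < M) (hT : 0 ≤ T) (ht : 0 < t) :
    ∃ (P : ℕ) (v : Fin P → ZMod N × ZMod N → ℝ),
      P ≤ (4 * ⌈2 * M / t⌉₊ + 2) *
          (2 * (2 * N * (N - 1) + ⌈2 * T / t⌉₊ - 1)) ^ ⌈2 * T / t⌉₊ ∧
      ∀ u : ZMod N × ZMod N → ℝ, (∀ k, |u k| ≤ M) → tv N u ≤ T →
        ∃ j : Fin P, ∀ k, |u k - v j k| ≤ t :=
  stmt10_general N hN M T t ht
end
end
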